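/- arXiv:0804.3639 — 6 statements merged into one kernel-verified Lean document; each statement's English description precedes it below -/
import Mathlib

section
/- For every positive integer d there exists a positive integer n_d, depending only on d, such that: for every polynomial h(t) = h_0 + h_1 t + ⋯ + h_d t^d of degree at most d with nonnegative integer coefficients and h_0 = 1, and every integer n ≥ n_d, the coefficients h_0(n), h_1(n), …, h_d(n) of U_n h(t) are all positive and form a strictly log concave (hence strictly unimodal) sequence. -/
open Polynomial

/-- `ehrG d p m = ∑_{i=0}^{d} p_i * C(m+d-i, d)`, the value at `m` of the polynomial `g`
associated to `p` by `p(t)/(1-t)^(d+1) = ∑_{m ≥ 0} g(m) tᵐ`. -/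
def ehrG (d : ℕ) (p : Polynomial ℤ) (m : ℕ) : ℤ :=
  ∑ i ∈ Finset.range (d + 1), p.coeff i * ((m + d - i).choose d : ℤ)

/-!
Let `g(m) = ehrG d h m`. The coefficients of `U_n h` are the fixed alternating combinations
`∑ₖ (-1)^(i-k) C(d+1, i-k) g(nk)` of the values `g(0), g(n), …, g(dn)`. Since
`d! C(m+d-j, d) = mᵈ + O(m^(d-1))`, nonnegative coefficients give
`d! g(m) = h(1) mᵈ + h(1) O(m^(d-1))`, and Worpitzky's identity `mᵈ = ∑ₖ A(d,k) C(m+k, d)` turns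
the alternating combinations of the `mᵈ` into Eulerian numbers. Hence
`d! h_i(n) / (h(1) nᵈ) = A(d, d-i) + O(1/n)` with a constant depending only on `d`. The Eulerian
numbers `A(d, d-i)`, `1 ≤ i ≤ d`, are positive and strictly log concave (induction on their
recurrence), and `h_0(n) = h_0 = 1`, so for large `n` the coefficients inherit both properties;
a positive strictly log concave sequence is strictly unimodal.
-/

open Finset
open scoped Nat

/-! ### Numerators of generating functions over `(1 - t)^(d+1)` -/

theorem PowerSeries.coeff_one_sub_X_pow {R : Type*} [CommRing R] (n k : ℕ) :
    coeff k ((1 - X : PowerSeries R) ^ n) = (-1) ^ k * n.choose k := by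
  have : (1 - X : PowerSeries R) = rescale (-1) ((1 + Polynomial.X : R[X]) : PowerSeries R) := by
    simp [rescale_X, sub_eq_add_neg]
  rw [this, ← map_pow, coeff_rescale, ← Polynomial.coe_pow, Polynomial.coeff_coe,
    coeff_one_add_X_pow]

noncomputable def hVector (d : ℕ) (g : ℕ → ℤ) (i : ℕ) : ℤ :=
  PowerSeries.coeff i ((1 - PowerSeries.X) ^ (d + 1) * PowerSeries.mk g)

theorem hVector_eq_sum (d : ℕ) (g : ℕ → ℤ) (i : ℕ) :
    hVector d g i = ∑ x ∈ antidiagonal i, (-1) ^ x.1 * ((d + 1).choose x.1 : ℤ) * g x.2 := by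
  simp [hVector, PowerSeries.coeff_mul, PowerSeries.coeff_one_sub_X_pow]

theorem hVector_sub_mul (d : ℕ) (a b : ℤ) (f g : ℕ → ℤ) (i : ℕ) :
    hVector d (fun k ↦ a * f k - b * g k) i = a * hVector d f i - b * hVector d g i := by
  simp only [hVector_eq_sum, mul_sum, ← sum_sub_distrib]
  exact sum_congr rfl fun _ _ ↦ by ring

theorem sum_range_choose_le_two_pow (n i : ℕ) : ∑ a ∈ range i, n.choose a ≤ 2 ^ n := by
  calc ∑ a ∈ range i, n.choose a ≤ ∑ a ∈ range (i + n + 1), n.choose a :=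
        sum_le_sum_of_subset (range_subset_range.2 (by omega))
    _ = ∑ a ∈ range (n + 1), n.choose a := by
        refine (sum_subset (range_subset_range.2 (by omega)) fun a _ ha ↦ ?_).symm
        exact Nat.choose_eq_zero_of_lt (by simpa using ha)
    _ = 2 ^ n := Nat.sum_range_choose n

theorem abs_hVector_le (d : ℕ) {g : ℕ → ℤ} {i : ℕ} {M : ℤ} (hg : ∀ k ≤ i, |g k| ≤ M) :
    |hVector d g i| ≤ 2 ^ (d + 1) * M := by
  have hM : 0 ≤ M := (abs_nonneg _).trans (hg 0 (Nat.zero_le _))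
  rw [hVector_eq_sum]
  calc _ ≤ ∑ x ∈ antidiagonal i, |(-1) ^ x.1 * ((d + 1).choose x.1 : ℤ) * g x.2| :=
        abs_sum_le_sum_abs _ _
    _ ≤ ∑ x ∈ antidiagonal i, ((d + 1).choose x.1 : ℤ) * M := by
        refine sum_le_sum fun x hx ↦ ?_
        rw [abs_mul, abs_mul, abs_pow, abs_neg, abs_one, one_pow, one_mul, Nat.abs_cast]
        exact mul_le_mul_of_nonneg_left (hg _ (HasAntidiagonal.antidiagonal.snd_le hx))
          (Nat.cast_nonneg _)
    _ = (∑ a ∈ range (i + 1), (d + 1).choose a : ℕ) * M := by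
        rw [Nat.sum_antidiagonal_eq_sum_range_succ_mk, Nat.cast_sum, sum_mul]
    _ ≤ 2 ^ (d + 1) * M := by
        refine mul_le_mul_of_nonneg_right ?_ hM
        exact_mod_cast sum_range_choose_le_two_pow _ _

theorem mk_ehrG {d : ℕ} {p : ℤ[X]} (hp : p.natDegree ≤ d) :
    PowerSeries.mk (ehrG d p) = p * (PowerSeries.invOneSubPow ℤ (d + 1)).val := by
  ext m
  rw [PowerSeries.coeff_mk, ehrG]
  conv_rhs => rw [as_sum_range_C_mul_X_pow' (p := p) (Nat.lt_succ_of_le hp)]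
  simp only [← Polynomial.coeToPowerSeries.ringHom_apply, map_sum, sum_mul]
  refine sum_congr rfl fun i hi ↦ ?_
  simp only [coeToPowerSeries.ringHom_apply, Polynomial.coe_mul, Polynomial.coe_C,
    Polynomial.coe_pow, Polynomial.coe_X, mul_assoc, PowerSeries.coeff_C_mul,
    PowerSeries.coeff_X_pow_mul', PowerSeries.coeff_mk,
    PowerSeries.invOneSubPow_val_succ_eq_mk_add_choose]
  split_ifs with h
  · rw [show d + (m - i) = m + d - i by omega]
  · rw [Nat.choose_eq_zero_of_lt (by simp at hi; omega), Nat.cast_zero, mul_zero]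

theorem coeff_eq_hVector_ehrG {d : ℕ} {p : ℤ[X]} (hp : p.natDegree ≤ d) (i : ℕ) :
    p.coeff i = hVector d (ehrG d p) i := by
  rw [hVector, mk_ehrG hp, mul_left_comm, ← PowerSeries.invOneSubPow_inv_eq_one_sub_pow,
    (PowerSeries.invOneSubPow ℤ (d + 1)).inv_val, mul_one, Polynomial.coeff_coe]

theorem ehrG_zero (d : ℕ) (p : ℤ[X]) : ehrG d p 0 = p.coeff 0 := by
  rw [ehrG, sum_eq_single 0 (fun j hj hj0 ↦ ?_) (by simp)]
  · simp
  · rw [Nat.choose_eq_zero_of_lt (by simp at hj; omega), Nat.cast_zero, mul_zero]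

/-! ### Eulerian numbers -/

-- `eulerian n k` counts the permutations of `n` letters with `k` descents.
def eulerian : ℕ → ℕ → ℕ
  | _, 0 => 1
  | 0, _ + 1 => 0
  | n + 1, k + 1 => (k + 2) * eulerian n (k + 1) + (n - k) * eulerian n k

@[simp] theorem eulerian_zero_right (n : ℕ) : eulerian n 0 = 1 := by
  cases n <;> rfl

theorem eulerian_succ_succ (n k : ℕ) :
    eulerian (n + 1) (k + 1) = (k + 2) * eulerian n (k + 1) + (n - k) * eulerian n k := rfl

theorem eulerian_eq_zero_of_lt : ∀ {n k : ℕ}, n < k → eulerian n k = 0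
  | 0, _ + 1, _ => rfl
  | n + 1, k + 1, h => by
    rw [eulerian_succ_succ, eulerian_eq_zero_of_lt (by omega : n < k + 1),
      Nat.sub_eq_zero_of_le (by omega)]
    simp

theorem eulerian_self {n : ℕ} (hn : 0 < n) : eulerian n n = 0 := by
  obtain ⟨n, rfl⟩ := Nat.exists_eq_add_one_of_ne_zero hn.ne'
  rw [eulerian_succ_succ, eulerian_eq_zero_of_lt n.lt_succ_self, Nat.sub_self]
  simp

theorem eulerian_pos : ∀ {n k : ℕ}, k < n → 0 < eulerian n k
  | _, 0, _ => by simp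
  | n + 1, k + 1, h => by
    rw [eulerian_succ_succ]
    have := Nat.mul_pos (Nat.sub_pos_of_lt (by omega : k < n)) (eulerian_pos (by omega : k < n))
    omega

theorem mul_choose_eq_choose_succ_add {d k : ℕ} (hk : k ≤ d) (m : ℕ) :
    m * (m + k).choose d =
      (k + 1) * (m + k).choose (d + 1) + (d - k) * (m + k + 1).choose (d + 1) := by
  rw [Nat.choose_succ_succ']
  rcases le_or_gt d (m + k) with h | h
  · obtain ⟨e, rfl⟩ := Nat.exists_eq_add_of_le hk
    obtain ⟨t, rfl⟩ : ∃ t, m = e + t := ⟨m - e, by omega⟩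
    have hsucc := Nat.choose_succ_right_eq (e + t + k) (k + e)
    rw [show e + t + k - (k + e) = t by omega] at hsucc
    rw [show k + e - k = e by omega]
    nlinarith [hsucc]
  · simp [Nat.choose_eq_zero_of_lt h, Nat.choose_eq_zero_of_lt (by omega : m + k < d + 1)]

-- Worpitzky's identity.
theorem sum_eulerian_mul_choose (d m : ℕ) :
    ∑ k ∈ range (d + 1), eulerian d k * (m + k).choose d = m ^ d := by
  induction d with
  | zero => simp
  | succ d ih =>
    have hshift : ∑ k ∈ range (d + 1), (k + 1) * eulerian d k * (m + k).choose (d + 1) =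
        ∑ k ∈ range (d + 1), (k + 2) * eulerian d (k + 1) * (m + k + 1).choose (d + 1) +
          m.choose (d + 1) := by
      have hlast : (d + 1 + 1) * eulerian d (d + 1) * (m + (d + 1)).choose (d + 1) = 0 := by
        simp [eulerian_eq_zero_of_lt]
      rw [← add_zero (∑ k ∈ range (d + 1), _), ← hlast,
        ← sum_range_succ (fun k ↦ (k + 1) * eulerian d k * (m + k).choose (d + 1)), sum_range_succ']
      simp [add_assoc]
    calc ∑ k ∈ range (d + 2), eulerian (d + 1) k * (m + k).choose (d + 1)
        = ∑ k ∈ range (d + 1), ((k + 2) * eulerian d (k + 1) + (d - k) * eulerian d k) *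
            (m + k + 1).choose (d + 1) + m.choose (d + 1) := by
          simp [sum_range_succ' _ (d + 1), eulerian_succ_succ, add_assoc]
      _ = ∑ k ∈ range (d + 1), (k + 1) * eulerian d k * (m + k).choose (d + 1) +
            ∑ k ∈ range (d + 1), (d - k) * eulerian d k * (m + k + 1).choose (d + 1) := by
          rw [hshift, add_right_comm, ← sum_add_distrib]
          simp only [add_mul]
      _ = ∑ k ∈ range (d + 1), eulerian d k * (m * (m + k).choose d) := by
          rw [← sum_add_distrib]
          refine sum_congr rfl fun k hk ↦ ?_
          rw [mul_choose_eq_choose_succ_add (Nat.lt_succ_iff.1 (mem_range.1 hk))]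
          ring
      _ = m ^ (d + 1) := by simp_rw [mul_left_comm _ m]; rw [← mul_sum, ih, pow_succ']

theorem eulerian_le_pow_self (n k : ℕ) : eulerian n k ≤ n ^ n := by
  rcases lt_or_ge n k with h | h
  · simp [eulerian_eq_zero_of_lt h]
  · rw [← sum_eulerian_mul_choose n n]
    calc eulerian n k ≤ eulerian n k * (n + k).choose n :=
          Nat.le_mul_of_pos_right _ (Nat.choose_pos (by omega))
      _ ≤ _ := single_le_sum (f := fun k ↦ eulerian n k * (n + k).choose n)
          (fun _ _ ↦ Nat.zero_le _) (mem_range.2 (by omega))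

theorem mul_lt_sq_of_recurrence {i c p q r s : ℕ} (hc : 0 < c) (hq : 0 < q) (hr : 0 < r)
    (hpr : p * r < q ^ 2) (hqs : q * s ≤ r ^ 2) :
    ((i + 2) * q + (c + 2) * p) * ((i + 4) * s + c * r) < ((i + 3) * r + (c + 1) * q) ^ 2 := by
  have hps : p * s ≤ q * r := by
    refine le_of_mul_le_mul_right ?_ (Nat.mul_pos hq hr)
    calc p * s * (q * r) = p * r * (q * s) := by ring
      _ ≤ q ^ 2 * r ^ 2 := Nat.mul_le_mul hpr.le hqs
      _ = q * r * (q * r) := by ring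
  zify at *
  have hpr' : p * r + 1 ≤ (q : ℤ) ^ 2 := hpr
  -- the gap is `(i+2)(i+4)(r²-qs) + (c+2)(i+4)(qr-ps) + c(c+2)(q²-pr) + (q-r)²`
  nlinarith [mul_le_mul_of_nonneg_left hqs (by positivity : (0 : ℤ) ≤ (i + 2) * (i + 4)),
    mul_le_mul_of_nonneg_left hps (by positivity : (0 : ℤ) ≤ (c + 2) * (i + 4)),
    mul_le_mul_of_nonneg_left hpr' (by positivity : (0 : ℤ) ≤ c * (c + 2)), sq_nonneg ((q : ℤ) - r)]

theorem eulerian_log_concave (n : ℕ) :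
    ∀ j, eulerian n j * eulerian n (j + 2) ≤ eulerian n (j + 1) ^ 2 ∧
      (j + 3 ≤ n → eulerian n j * eulerian n (j + 2) < eulerian n (j + 1) ^ 2) := by
  induction n with
  | zero => intro j; simp [eulerian_eq_zero_of_lt (by omega : 0 < j + 2)]
  | succ n ih =>
    have strict : ∀ j, j + 3 ≤ n + 1 →
        eulerian (n + 1) j * eulerian (n + 1) (j + 2) < eulerian (n + 1) (j + 1) ^ 2 := by
      rintro (_ | i) hj
      · have h1 := eulerian_pos (by omega : 1 < n)
        have h2 := (ih 0).1
        rw [eulerian_zero_right, one_mul] at h2 ⊢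
        rw [eulerian_succ_succ, eulerian_succ_succ, eulerian_zero_right]
        obtain ⟨n, rfl⟩ : ∃ n', n = n' + 1 := ⟨n - 1, by omega⟩
        simp only [Nat.add_sub_cancel, Nat.sub_zero]
        nlinarith
      · obtain ⟨c, rfl⟩ : ∃ c, n = i + 2 + c := ⟨n - i - 2, by omega⟩
        rw [eulerian_succ_succ, show i + 1 + 2 = (i + 2) + 1 by rfl, eulerian_succ_succ,
          eulerian_succ_succ]
        rw [show i + 2 + c - i = c + 2 by omega, show i + 2 + c - (i + 1) = c + 1 by omega,
          show i + 2 + c - (i + 2) = c by omega]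
        exact mul_lt_sq_of_recurrence (by omega) (eulerian_pos (by omega))
          (eulerian_pos (by omega)) ((ih i).2 (by omega)) (ih (i + 1)).1
    intro j
    refine ⟨?_, strict j⟩
    rcases le_or_gt (j + 3) (n + 1) with hj | hj
    · exact (strict j hj).le
    · have : eulerian (n + 1) (j + 2) = 0 := by
        rcases (show j + 2 = n + 1 ∨ n + 1 < j + 2 by omega) with h | h
        · rw [h, eulerian_self n.succ_pos]
        · exact eulerian_eq_zero_of_lt h
      simp [this]

theorem eulerian_mul_lt_sq {n k : ℕ} (h : k + 2 ≤ n) :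
    eulerian n k * eulerian n (k + 2) < eulerian n (k + 1) ^ 2 := by
  rcases (show k + 3 ≤ n ∨ k + 2 = n by omega) with h3 | rfl
  · exact (eulerian_log_concave n k).2 h3
  · rw [eulerian_self (by omega), mul_zero]
    exact pow_pos (eulerian_pos (by omega)) 2

noncomputable def eulerianPoly (d : ℕ) : ℤ[X] :=
  ∑ i ∈ range (d + 1), C (eulerian d (d - i) : ℤ) * X ^ i

theorem natDegree_eulerianPoly_le (d : ℕ) : (eulerianPoly d).natDegree ≤ d :=
  natDegree_sum_le_of_forall_le _ _ fun _ hi ↦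
    (natDegree_C_mul_X_pow_le _ _).trans (Nat.lt_succ_iff.1 (mem_range.1 hi))

theorem coeff_eulerianPoly {d i : ℕ} (hi : i ≤ d) :
    (eulerianPoly d).coeff i = eulerian d (d - i) := by
  simp [eulerianPoly, finsetSum_coeff, Nat.lt_succ_iff.2 hi]

theorem ehrG_eulerianPoly (d m : ℕ) : ehrG d (eulerianPoly d) m = (m : ℤ) ^ d := by
  rw [ehrG, sum_congr rfl fun i hi ↦ by
    rw [coeff_eulerianPoly (Nat.lt_succ_iff.1 (mem_range.1 hi))], ← sum_range_reflect]
  rw [← Nat.cast_pow, ← sum_eulerian_mul_choose d m, Nat.cast_sum]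
  refine sum_congr rfl fun k hk ↦ ?_
  have hk := mem_range.1 hk
  rw [show d - (d + 1 - 1 - k) = k by omega, show m + d - (d + 1 - 1 - k) = m + k by omega]
  push_cast; rfl

theorem hVector_pow {d i : ℕ} (hi : i ≤ d) :
    hVector d (fun k ↦ (k : ℤ) ^ d) i = eulerian d (d - i) := by
  rw [← coeff_eulerianPoly hi, coeff_eq_hVector_ehrG (natDegree_eulerianPoly_le d),
    funext (ehrG_eulerianPoly d)]

/-! ### Asymptotics of the coefficients of `U_n h` -/

theorem abs_factorial_mul_choose_sub_pow_le {d j : ℕ} (hj : j ≤ d) (m : ℕ) :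
    |(d ! * (m + d - j).choose d : ℤ) - (m : ℤ) ^ d| ≤ 2 * d ^ 2 * (m + d) ^ (d - 1) := by
  -- `m - d` truncates at `0`, so the lower bounds also hold for `m < d`.
  have hlow : (m - d) ^ d ≤ d ! * (m + d - j).choose d := by
    rw [← Nat.descFactorial_eq_factorial_mul_choose]
    exact (Nat.pow_le_pow_left (by omega) d).trans (Nat.pow_sub_le_descFactorial _ _)
  have hup : d ! * (m + d - j).choose d ≤ (m + d) ^ d := by
    rw [← Nat.descFactorial_eq_factorial_mul_choose]
    exact (Nat.descFactorial_le_pow _ _).trans (Nat.pow_le_pow_left (by omega) d)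
  have hlow' : (m - d) ^ d ≤ m ^ d := Nat.pow_le_pow_left (Nat.sub_le _ _) d
  have hup' : m ^ d ≤ (m + d) ^ d := Nat.pow_le_pow_left (by omega) d
  have hgap : ((m + d : ℕ) : ℤ) ^ d - ((m - d : ℕ) : ℤ) ^ d ≤ 2 * d ^ 2 * (m + d) ^ (d - 1) := by
    refine (le_abs_self _).trans ((abs_pow_sub_pow_le _ _ d).trans ?_)
    have hdiff : |((m + d : ℕ) : ℤ) - ((m - d : ℕ) : ℤ)| ≤ 2 * d := by
      rw [abs_le]; constructor <;> omega
    rw [max_eq_left (by simp only [Nat.abs_cast]; exact_mod_cast (by omega : m - d ≤ m + d)),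
      Nat.abs_cast]
    calc _ ≤ (2 * d : ℤ) * d * ((m + d : ℕ) : ℤ) ^ (d - 1) := by gcongr
      _ = _ := by push_cast; ring
  zify at hlow hup hlow' hup'
  push_cast at hgap
  rw [abs_sub_le_iff]
  constructor <;> linarith

theorem coeff_zero_le_eval_one {p : ℤ[X]} (hnn : ∀ i, 0 ≤ p.coeff i) : p.coeff 0 ≤ p.eval 1 := by
  rw [eval_eq_sum_range]
  simpa using single_le_sum (f := fun i ↦ p.coeff i * 1 ^ i) (fun j _ ↦ by simpa using hnn j)
    (mem_range.2 p.natDegree.succ_pos)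

theorem abs_factorial_mul_ehrG_sub_le {d : ℕ} {p : ℤ[X]} (hp : p.natDegree ≤ d)
    (hnn : ∀ i, 0 ≤ p.coeff i) (m : ℕ) :
    |d ! * ehrG d p m - p.eval 1 * m ^ d| ≤ p.eval 1 * (2 * d ^ 2 * (m + d) ^ (d - 1)) := by
  rw [eval_eq_sum_range' (Nat.lt_succ_of_le hp), ehrG, mul_sum, sum_mul, sum_mul,
    ← sum_sub_distrib]
  refine (abs_sum_le_sum_abs _ _).trans (sum_le_sum fun j hj ↦ ?_)
  rw [one_pow, mul_one, ← mul_left_comm, ← mul_sub, abs_mul, abs_of_nonneg (hnn j)]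
  exact mul_le_mul_of_nonneg_left
    (abs_factorial_mul_choose_sub_pow_le (Nat.lt_succ_iff.1 (mem_range.1 hj)) m) (hnn j)

theorem mul_sq_mul_add_pow_pred_le (n d : ℕ) :
    n * (2 * d ^ 2 * (n * d + d) ^ (d - 1)) ≤ d * (2 * d) ^ d * n ^ d := by
  rcases Nat.eq_zero_or_pos n with rfl | hn
  · simp
  obtain _ | e := d
  · simp
  have : n * (e + 1) + (e + 1) ≤ 2 * (e + 1) * n := by nlinarith
  calc n * (2 * (e + 1) ^ 2 * (n * (e + 1) + (e + 1)) ^ e)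
      ≤ n * (2 * (e + 1) ^ 2 * (2 * (e + 1) * n) ^ e) := by gcongr
    _ = (e + 1) * (2 * (e + 1)) ^ (e + 1) * n ^ (e + 1) := by rw [mul_pow]; ring

theorem natCast_mul_abs_factorial_mul_coeff_sub_le {d n : ℕ} {h U : ℤ[X]}
    (hh : h.natDegree ≤ d) (hnn : ∀ i, 0 ≤ h.coeff i) (hU : U.natDegree ≤ d)
    (hUh : ∀ m, ehrG d U m = ehrG d h (n * m)) {i : ℕ} (hi : i ≤ d) :
    n * |d ! * U.coeff i - h.eval 1 * eulerian d (d - i) * n ^ d| ≤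
      h.eval 1 * (2 ^ (d + 1) * d * (2 * d) ^ d : ℕ) * n ^ d := by
  have hH : 0 ≤ h.eval 1 := (hnn 0).trans (coeff_zero_le_eval_one hnn)
  have hlin : d ! * U.coeff i - h.eval 1 * eulerian d (d - i) * n ^ d =
      hVector d (fun k ↦ d ! * ehrG d h (n * k) - (h.eval 1 * n ^ d) * (k : ℤ) ^ d) i := by
    rw [coeff_eq_hVector_ehrG hU, funext hUh, ← hVector_pow hi, mul_right_comm (h.eval 1),
      hVector_sub_mul]
  have hterm : ∀ k ≤ i, |d ! * ehrG d h (n * k) - (h.eval 1 * n ^ d) * (k : ℤ) ^ d| ≤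
      h.eval 1 * (2 * d ^ 2 * (n * d + d) ^ (d - 1) : ℕ) := fun k hk ↦ by
    have := abs_factorial_mul_ehrG_sub_le hh hnn (n * k)
    push_cast at this ⊢
    rw [mul_assoc, ← mul_pow]
    refine this.trans (mul_le_mul_of_nonneg_left ?_ hH)
    gcongr
    exact_mod_cast hk.trans hi
  rw [hlin]
  calc (n : ℤ) * |hVector d _ i|
      ≤ n * (2 ^ (d + 1) * (h.eval 1 * (2 * d ^ 2 * (n * d + d) ^ (d - 1) : ℕ))) :=
        mul_le_mul_of_nonneg_left (abs_hVector_le d hterm) (Nat.cast_nonneg _)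
    _ = 2 ^ (d + 1) * h.eval 1 * (n * (2 * d ^ 2 * (n * d + d) ^ (d - 1)) : ℕ) := by
        push_cast; ring
    _ ≤ 2 ^ (d + 1) * h.eval 1 * (d * (2 * d) ^ d * n ^ d : ℕ) := by
        exact mul_le_mul_of_nonneg_left (by exact_mod_cast mul_sq_mul_add_pow_pred_le n d)
          (by positivity)
    _ = _ := by push_cast; ring

theorem abs_normalized_coeff_sub_eulerian_le {d n : ℕ} {h U : ℤ[X]} (hn : 0 < n)
    (hh : h.natDegree ≤ d) (hnn : ∀ i, 0 ≤ h.coeff i) (hH : 0 < h.eval 1)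
    (hU : U.natDegree ≤ d) (hUh : ∀ m, ehrG d U m = ehrG d h (n * m)) {i : ℕ} (hi : i ≤ d) :
    |(d ! / (h.eval 1 * n ^ d) : ℝ) * U.coeff i - eulerian d (d - i)| ≤
      (2 ^ (d + 1) * d * (2 * d) ^ d : ℕ) / n := by
  have hpos : (0 : ℝ) < h.eval 1 * n ^ d := by positivity
  have hint : ((n * |d ! * U.coeff i - h.eval 1 * eulerian d (d - i) * n ^ d| : ℤ) : ℝ) ≤
      ((h.eval 1 * (2 ^ (d + 1) * d * (2 * d) ^ d : ℕ) * n ^ d : ℤ) : ℝ) := by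
    exact_mod_cast natCast_mul_abs_factorial_mul_coeff_sub_le hh hnn hU hUh hi
  rw [div_mul_eq_mul_div, div_sub' hpos.ne', abs_div, abs_of_pos hpos,
    div_le_div_iff₀ hpos (by exact_mod_cast hn)]
  push_cast at hint ⊢
  rw [mul_right_comm _ _ (eulerian d (d - i) : ℝ)]
  linarith

/-! ### Log concavity survives small perturbations -/

theorem mul_lt_sq_of_abs_sub_le {K : Type*} [CommRing K] [LinearOrder K] [IsStrictOrderedRing K]
    {a b c x y z F ε : K} (hx : |x - a| ≤ ε) (hy : |y - b| ≤ ε) (hz : |z - c| ≤ ε)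
    (ha : 0 ≤ a) (hb : 0 ≤ b) (hc : 0 ≤ c) (haF : a ≤ F) (hbF : b ≤ F) (hcF : c ≤ F)
    (hlc : a * c + 1 ≤ b ^ 2) (hε : 4 * F * ε < 1) : x * z < y ^ 2 := by
  have hε0 : 0 ≤ ε := (abs_nonneg _).trans hx
  have hb1 : 1 ≤ b := by nlinarith
  have hεb : ε ≤ b := by nlinarith
  rw [abs_le] at hx hy hz
  have hxz : x * z ≤ (a + ε) * (c + ε) := by
    refine (le_abs_self _).trans ?_
    rw [abs_mul]
    exact mul_le_mul (abs_le.2 ⟨by linarith, by linarith⟩) (abs_le.2 ⟨by linarith, by linarith⟩)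
      (abs_nonneg _) (by linarith)
  have hy2 : (b - ε) ^ 2 ≤ y ^ 2 := pow_le_pow_left₀ (by linarith) (by linarith) 2
  nlinarith

theorem mul_lt_sq_of_abs_mul_sub_le {K : Type*} [CommRing K] [LinearOrder K]
    [IsStrictOrderedRing K] {κ a b c x y z F ε : K} (hx : |κ * x - a| ≤ ε)
    (hy : |κ * y - b| ≤ ε) (hz : |κ * z - c| ≤ ε) (ha : 0 ≤ a) (hb : 0 ≤ b) (hc : 0 ≤ c)
    (haF : a ≤ F) (hbF : b ≤ F) (hcF : c ≤ F) (hlc : a * c + 1 ≤ b ^ 2) (hε : 4 * F * ε < 1) :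
    x * z < y ^ 2 := by
  have key := mul_lt_sq_of_abs_sub_le hx hy hz ha hb hc haF hbF hcF hlc hε
  rw [mul_mul_mul_comm, ← sq, mul_pow] at key
  exact lt_of_mul_lt_mul_left key (sq_nonneg κ)

theorem pos_of_abs_mul_sub_le {K : Type*} [CommRing K] [LinearOrder K] [IsStrictOrderedRing K]
    {κ a x ε : K} (hκ : 0 < κ) (hx : |κ * x - a| ≤ ε) (hεa : ε < a) : 0 < x :=
  pos_of_mul_pos_right (by linarith [(abs_le.1 hx).1]) hκ.le

theorem lt_of_mul_lt_sq_of_le {K : Type*} [CommRing K] [LinearOrder K] [IsStrictOrderedRing K]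
    {p q r : K} (hp : 0 < p) (hq : 0 ≤ q) (hqp : q ≤ p) (h : p * r < q ^ 2) : r < q := by
  by_contra! hrq
  nlinarith [mul_le_mul hqp hrq hq hp.le]

theorem exists_peak_of_log_concave {K : Type*} [CommRing K] [LinearOrder K]
    [IsStrictOrderedRing K] {a : ℕ → K} {d : ℕ} (hpos : ∀ i ≤ d, 0 < a i)
    (hlc : ∀ i, 1 ≤ i → i + 1 ≤ d → a (i - 1) * a (i + 1) < a i ^ 2) :
    ∃ j ≤ d, (∀ k, k < j → a k < a (k + 1)) ∧ (∀ k, j + 1 ≤ k → k < d → a (k + 1) < a k) := by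
  classical
  have hex : ∃ j, j = d ∨ a (j + 1) ≤ a j := ⟨d, Or.inl rfl⟩
  refine ⟨Nat.find hex, Nat.find_min' hex (Or.inl rfl), fun k hk ↦ ?_, ?_⟩
  · have := Nat.find_min hex hk
    push Not at this
    exact this.2
  have step : ∀ k, k + 2 ≤ d → a (k + 1) ≤ a k → a (k + 2) < a (k + 1) := fun k hk hle ↦
    lt_of_mul_lt_sq_of_le (hpos k (by omega)) (hpos (k + 1) (by omega)).le hle
      (by simpa using hlc (k + 1) (by omega) (by omega))
  have hdesc : ∀ k, Nat.find hex ≤ k → k < d → a (k + 1) ≤ a k := by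
    intro k hk
    induction k, hk using Nat.le_induction with
    | base => exact fun hd ↦ (Nat.find_spec hex).resolve_left hd.ne
    | succ k hk ih => exact fun hkd ↦ (step k (by omega) (ih (by omega))).le
  intro k hk hkd
  obtain ⟨k, rfl⟩ := Nat.exists_eq_add_of_le' (Nat.one_le_of_lt hk)
  exact step k (by omega) (hdesc k (by omega) (by omega))

theorem stmt2_general (d : ℕ) :
    ∃ nd : ℕ, 0 < nd ∧
      ∀ (h Uh : Polynomial ℤ) (n : ℕ),
        h.natDegree ≤ d → (∀ i, 0 ≤ h.coeff i) → h.coeff 0 = 1 →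
        Uh.natDegree ≤ d → (∀ m : ℕ, ehrG d Uh m = ehrG d h (n * m)) →
        nd ≤ n →
        -- the coefficients h_0(n), …, h_d(n) are positive …
        (∀ i ≤ d, 0 < Uh.coeff i) ∧
        -- … strictly log concave …
        (∀ i : ℕ, 1 ≤ i → i + 1 ≤ d →
          Uh.coeff (i - 1) * Uh.coeff (i + 1) < (Uh.coeff i) ^ 2) ∧
        -- … and hence strictly unimodal
        (∃ j ≤ d, (∀ k, k < j → Uh.coeff k < Uh.coeff (k + 1)) ∧
          (∀ k, j + 1 ≤ k → k < d → Uh.coeff (k + 1) < Uh.coeff k)) := by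
  set C : ℕ := 2 ^ (d + 1) * d * (2 * d) ^ d
  refine ⟨4 * d ^ d * C + 1, Nat.succ_pos _, fun h Uh n hh hnn h0 hU hUh hn ↦ ?_⟩
  have hH : 0 < h.eval 1 := (h0 ▸ one_pos : 0 < h.coeff 0).trans_le (coeff_zero_le_eval_one hnn)
  have hn0 : (0 : ℝ) < n := by exact_mod_cast (by omega : 0 < n)
  have hκ : (0 : ℝ) < d ! / (h.eval 1 * n ^ d) := by
    have : (0 : ℝ) < h.eval 1 := by exact_mod_cast hH
    positivity
  have happrox := fun i (hi : i ≤ d) ↦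
    abs_normalized_coeff_sub_eulerian_le (by omega) hh hnn hH hU hUh hi
  have hε : 4 * (d ^ d : ℝ) * (C / n) < 1 := by
    rw [mul_div_assoc', div_lt_one (by positivity)]
    exact_mod_cast (by omega : 4 * d ^ d * C < n)
  have hAF (k : ℕ) : (eulerian d k : ℝ) ≤ d ^ d := by exact_mod_cast eulerian_le_pow_self d k
  have hpos : ∀ i ≤ d, 0 < Uh.coeff i := by
    intro i hi
    rcases Nat.eq_zero_or_pos i with rfl | hi0
    · rw [← ehrG_zero d, hUh, mul_zero, ehrG_zero, h0]; exact one_pos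
    have hA : (1 : ℝ) ≤ eulerian d (d - i) := by exact_mod_cast eulerian_pos (by omega)
    have hdd : (1 : ℝ) ≤ d ^ d := by exact_mod_cast Nat.pow_self_pos
    exact_mod_cast pos_of_abs_mul_sub_le hκ (happrox i hi) (by nlinarith)
  have hlc : ∀ i : ℕ, 1 ≤ i → i + 1 ≤ d →
      Uh.coeff (i - 1) * Uh.coeff (i + 1) < (Uh.coeff i) ^ 2 := by
    intro i hi hid
    have hA := eulerian_mul_lt_sq (n := d) (k := d - (i + 1)) (by omega)
    rw [show d - (i + 1) + 2 = d - (i - 1) by omega, show d - (i + 1) + 1 = d - i by omega,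
      mul_comm] at hA
    exact_mod_cast mul_lt_sq_of_abs_mul_sub_le (happrox (i - 1) (by omega))
      (happrox i (by omega)) (happrox (i + 1) hid) (Nat.cast_nonneg _) (Nat.cast_nonneg _)
      (Nat.cast_nonneg _) (hAF _) (hAF _) (hAF _) (by exact_mod_cast hA) hε
  exact ⟨hpos, hlc, exists_peak_of_log_concave hpos hlc⟩

theorem stmt2 (d : ℕ) (hd : 0 < d) :
    ∃ nd : ℕ, 0 < nd ∧
      ∀ (h Uh : Polynomial ℤ) (n : ℕ),
        h.natDegree ≤ d → (∀ i, 0 ≤ h.coeff i) → h.coeff 0 = 1 →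
        Uh.natDegree ≤ d → (∀ m : ℕ, ehrG d Uh m = ehrG d h (n * m)) →
        nd ≤ n →
        -- the coefficients h_0(n), …, h_d(n) are positive …
        (∀ i ≤ d, 0 < Uh.coeff i) ∧
        -- … strictly log concave …
        (∀ i : ℕ, 1 ≤ i → i + 1 ≤ d →
          Uh.coeff (i - 1) * Uh.coeff (i + 1) < (Uh.coeff i) ^ 2) ∧
        -- … and hence strictly unimodal
        (∃ j ≤ d, (∀ k, k < j → Uh.coeff k < Uh.coeff (k + 1)) ∧
          (∀ k, j + 1 ≤ k → k < d → Uh.coeff (k + 1) < Uh.coeff k)) :=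
  stmt2_general d
end

section
/- For every positive integer d there exist positive integers m_d and n_d, depending only on d, such that: for every polynomial h(t) = h_0 + h_1 t + ⋯ + h_d t^d of degree at most d with nonnegative integer coefficients, h_0 = 1, which additionally satisfies h_0 + h_1 + ⋯ + h_{i+1} ≥ h_d + h_{d−1} + ⋯ + h_{d−i} for all 0 ≤ i ≤ ⌊d/2⌋ − 1, and for every integer n ≥ n_d, the coefficients of U_n h(t) satisfy the chain of strict inequalities h_0 = h_0(n) < h_d(n) < h_1(n) < h_{d−1}(n) < h_2(n) < ⋯ < h_i(n) < h_{d−i}(n) < h_{i+1}(n) < ⋯ < h_{⌊(d+1)/2⌋}(n) < m_d · h_d(n). -/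
open Polynomial

/-- The index of the `k`-th entry of the interleaved chain
`h_0, h_d, h_1, h_{d-1}, h_2, h_{d-2}, …`, which ends (at `k = d`) with `h_{⌊(d+1)/2⌋}`. -/
def chainIdx (d k : ℕ) : ℕ := if k % 2 = 0 then k / 2 else d - (k - 1) / 2

open Finset Finset.Nat

/-!
The `j`-th coefficient of `U_n h` is `∑ᵢ hᵢ c(jn - i)`, where `c(s)` is the coefficient of `tˢ` in
`(1 + t + ⋯ + t^{n-1})^{d+1}`, i.e. the number of `(d+1)`-tuples in `[0, n)` with sum `s`: dividing
each part of a composition of `nm - i` by `n` gives `C(nm+d-i, d) = ∑ⱼ c(jn - i) C(m+d-j, d)`, and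
the binomials `C(m+d-j, d)` are triangular in `(m, j)`.

The sequence `c` is symmetric about `(d+1)(n-1)/2` and unimodal, strictly so when `n ≥ 2`.
For `n ≥ d + 2` this compares the weights of each `hᵢ` and yields `h_a(n) < h_{d-a}(n)`.
By the symmetry, `h_{a+1}(n) - h_{d-a}(n) = ∑ᵢ (hᵢ - h_{d+1-i}) c((a+1)n - i)`; the hypothesis
says exactly that the partial sums of `hᵢ - h_{d+1-i}` are nonnegative, so Abel summation against
the decreasing `c((a+1)n - i)` makes this positive. Finally `h_j(n) ≤ h(1) nᵈ` for every `j`, while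
`h_d(n) ≥ h(1) C(n-1, d)` and `nᵈ ≤ 2ᵈ d! C(n-1, d)` once `n > 2d`.
-/

theorem card_filter_antidiagonalTuple_succ (k s : ℕ) (Q : ℕ → Prop) [DecidablePred Q] :
    #{x ∈ antidiagonalTuple (k + 1) s | ∀ t, Q (x t)} =
      ∑ v ∈ range (s + 1),
        if Q v then #{x ∈ antidiagonalTuple k (s - v) | ∀ t, Q (x t)} else 0 := by
  rw [← sum_filter, ← card_sigma]
  refine card_nbij' (fun x ↦ ⟨x 0, Fin.tail x⟩) (fun p ↦ Fin.cons p.1 p.2) ?_ ?_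
    (fun x _ ↦ Fin.cons_self_tail x) (fun p _ ↦ by simp)
  · intro x hx
    simp only [mem_coe, mem_filter, mem_antidiagonalTuple] at hx
    obtain ⟨hsum, hQ⟩ := hx
    rw [Fin.sum_univ_succ] at hsum
    simp only [mem_coe, mem_sigma, mem_filter, mem_range, mem_antidiagonalTuple]
    exact ⟨⟨by omega, hQ 0⟩, by simp only [Fin.tail]; omega, fun t ↦ hQ t.succ⟩
  · rintro ⟨v, y⟩ hp
    simp only [mem_coe, mem_sigma, mem_filter, mem_range, mem_antidiagonalTuple] at hp
    obtain ⟨⟨hv, hQv⟩, hsum, hQ⟩ := hp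
    simp only [mem_coe, mem_filter, mem_antidiagonalTuple, Fin.sum_cons]
    exact ⟨by omega, Fin.cases hQv hQ⟩

theorem card_antidiagonalTuple_succ (k s : ℕ) :
    #(antidiagonalTuple (k + 1) s) = (s + k).choose k := by
  induction k generalizing s with
  | zero => simp [antidiagonalTuple_one]
  | succ k ih =>
    have h := card_filter_antidiagonalTuple_succ (k + 1) s (fun _ ↦ True)
    simp only [forall_const, filter_true, if_true, ih] at h
    rw [h, ← add_assoc, ← Nat.sum_range_add_choose, ← sum_range_reflect]
    exact sum_congr rfl fun v hv ↦ by rw [mem_range] at hv; congr 2; omega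

section Unimodal

variable {α : Type*} [Preorder α] {f : ℕ → α} {C : ℕ}

theorem le_of_symm_of_le_succ (hsymm : ∀ s ≤ C, f (C - s) = f s)
    (hstep : ∀ s, 2 * s + 2 ≤ C → f s ≤ f (s + 1)) {x y : ℕ} (hxy : x ≤ y) (hC : x + y ≤ C) :
    f x ≤ f y := by
  have hmono : ∀ z, x ≤ z → 2 * z ≤ C → f x ≤ f z := by
    intro z hxz
    induction z, hxz using Nat.le_induction with
    | base => exact fun _ ↦ le_rfl
    | succ z _ ih => exact fun hz ↦ (ih (by omega)).trans (hstep z (by omega))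
  rcases le_or_gt (2 * y) C with hy | hy
  · exact hmono y hxy hy
  · rw [← hsymm y (by omega)]
    exact hmono _ (by omega) (by omega)

theorem lt_of_symm_of_lt_succ (hsymm : ∀ s ≤ C, f (C - s) = f s)
    (hstep : ∀ s, 2 * s + 2 ≤ C → f s < f (s + 1)) {x y : ℕ} (hxy : x < y) (hC : x + y < C) :
    f x < f y := by
  have hmin : f (min y (C - y)) = f y := by
    rcases le_total y (C - y) with h | h
    · rw [min_eq_left h]
    · rw [min_eq_right h, hsymm y (by omega)]
  rw [← hmin]
  exact (hstep x (by omega)).trans_le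
    (le_of_symm_of_le_succ hsymm (fun s hs ↦ (hstep s hs).le) (by omega) (by omega))

end Unimodal

def boundedTuples (k n s : ℕ) : Finset (Fin k → ℕ) :=
  {x ∈ antidiagonalTuple k s | ∀ t, x t < n}

def boundedCount (k n s : ℕ) : ℕ := #(boundedTuples k n s)

section BoundedCount

variable {k n s : ℕ}

theorem boundedCount_succ (k n s : ℕ) :
    boundedCount (k + 1) n s =
      ∑ v ∈ range (s + 1), if v < n then boundedCount k n (s - v) else 0 :=
  card_filter_antidiagonalTuple_succ k s (· < n)

theorem boundedCount_zero_right (k : ℕ) (hn : 0 < n) : boundedCount k n 0 = 1 := by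
  simp [boundedCount, boundedTuples, antidiagonalTuple_zero_right, filter_singleton, hn]

theorem boundedCount_pos (hn : 0 < n) (hs : s ≤ k * (n - 1)) : 0 < boundedCount k n s := by
  induction k generalizing s with
  | zero => simp_all [boundedCount_zero_right]
  | succ k ih =>
    rw [boundedCount_succ]
    have hv : min (n - 1) s ∈ range (s + 1) := mem_range.2 (by omega)
    refine lt_of_lt_of_le ?_ (single_le_sum (fun _ _ ↦ Nat.zero_le _) hv)
    rw [if_pos (by omega)]
    exact ih (by rw [Nat.succ_mul] at hs; omega)

theorem boundedCount_succ_le_pow (k n s : ℕ) : boundedCount (k + 1) n s ≤ n ^ k := by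
  induction k generalizing s with
  | zero =>
    simpa [boundedCount, boundedTuples, antidiagonalTuple_one] using card_filter_le {![s]} _
  | succ k ih =>
    rw [boundedCount_succ, ← sum_filter, pow_succ']
    calc ∑ v ∈ range (s + 1) with v < n, boundedCount (k + 1) n (s - v)
        ≤ #{v ∈ range (s + 1) | v < n} * n ^ k := sum_le_card_nsmul _ _ _ fun v _ ↦ ih _
      _ ≤ n * n ^ k := by
        gcongr
        simpa using card_le_card (t := range n) fun v hv ↦ by simp_all

theorem boundedCount_succ_eq_choose (hs : s < n) : boundedCount (k + 1) n s = (s + k).choose k := by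
  rw [boundedCount, boundedTuples, filter_true_of_mem, card_antidiagonalTuple_succ]
  intro x hx t
  rw [mem_antidiagonalTuple] at hx
  exact lt_of_le_of_lt (hx ▸ single_le_sum (fun _ _ ↦ Nat.zero_le _) (mem_univ t)) hs

theorem complement_mem_boundedTuples {x : Fin k → ℕ} (hx : x ∈ boundedTuples k n s) :
    (fun t ↦ n - 1 - x t) ∈ boundedTuples k n (k * (n - 1) - s) := by
  simp only [boundedTuples, mem_filter, mem_antidiagonalTuple] at hx ⊢
  obtain ⟨hsum, hlt⟩ := hx
  have hadd : ∑ t, (n - 1 - x t) + ∑ t, x t = k * (n - 1) := by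
    rw [← sum_add_distrib, sum_congr rfl fun t _ ↦ Nat.sub_add_cancel (by have := hlt t; omega)]
    simp
  exact ⟨by omega, fun t ↦ by have := hlt t; omega⟩

theorem boundedCount_symm (hs : s ≤ k * (n - 1)) :
    boundedCount k n (k * (n - 1) - s) = boundedCount k n s := by
  have hss : k * (n - 1) - (k * (n - 1) - s) = s := by omega
  have hlt {s x} (hx : x ∈ boundedTuples k n s) t : x t < n := (mem_filter.1 hx).2 t
  refine card_nbij' (fun x t ↦ n - 1 - x t) (fun x t ↦ n - 1 - x t) (fun x hx ↦ ?_)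
    (fun x hx ↦ ?_) (fun x hx ↦ ?_) (fun x hx ↦ ?_)
  · simpa [hss] using complement_mem_boundedTuples (mem_coe.1 hx)
  · exact complement_mem_boundedTuples (mem_coe.1 hx)
  · funext t; have := hlt (mem_coe.1 hx) t; dsimp only; omega
  · funext t; have := hlt (mem_coe.1 hx) t; dsimp only; omega

theorem boundedCount_succ_add_one (k s : ℕ) (hn : 0 < n) :
    boundedCount (k + 1) n (s + 1) + (if n - 1 ≤ s then boundedCount k n (s - (n - 1)) else 0) =
      boundedCount (k + 1) n s + boundedCount k n (s + 1) := by
  have hcorr : (if n - 1 ≤ s then boundedCount k n (s - (n - 1)) else 0) =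
      ∑ v ∈ range (s + 1), if v = n - 1 then boundedCount k n (s - v) else 0 := by
    simp only [sum_ite_eq', mem_range, Nat.lt_succ_iff]
  rw [boundedCount_succ k n (s + 1), boundedCount_succ k n s, sum_range_succ', if_pos hn,
    Nat.sub_zero, hcorr, add_right_comm, ← sum_add_distrib]
  congr 1
  refine sum_congr rfl fun v _ ↦ ?_
  by_cases h₁ : v + 1 < n
  · rw [if_pos h₁, if_neg (by omega), if_pos (by omega), Nat.add_zero, Nat.add_sub_add_right]
  · by_cases h₂ : v = n - 1
    · rw [if_neg h₁, if_pos h₂, if_pos (by omega), Nat.zero_add]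
    · rw [if_neg h₁, if_neg h₂, if_neg (by omega)]


theorem boundedCount_le_of_le {x y : ℕ} (hxy : x ≤ y) (hC : x + y ≤ k * (n - 1)) :
    boundedCount k n x ≤ boundedCount k n y := by
  induction k generalizing x y with
  | zero => exact le_of_eq (congrArg _ (by omega))
  | succ k ih =>
    refine le_of_symm_of_le_succ (fun s hs ↦ boundedCount_symm hs) ?_ hxy hC
    intro s hs
    have hn : 0 < n := Nat.pos_of_ne_zero (by rintro rfl; simp at hs)
    have hrec := boundedCount_succ_add_one k s hn
    have hsucc : (k + 1) * (n - 1) = k * (n - 1) + (n - 1) := Nat.succ_mul k (n - 1)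
    split_ifs at hrec with h
    · have := ih (x := s - (n - 1)) (y := s + 1) (by omega) (by omega)
      omega
    · omega

theorem boundedCount_lt_of_lt (hk : 2 ≤ k) (hn : 2 ≤ n) {x y : ℕ} (hxy : x < y)
    (hC : x + y < k * (n - 1)) : boundedCount k n x < boundedCount k n y := by
  induction k, hk using Nat.le_induction generalizing x y with
  | base =>
    refine lt_of_symm_of_lt_succ (fun s hs ↦ boundedCount_symm hs) ?_ hxy hC
    intro s hs
    have hrec := boundedCount_succ_add_one (n := n) 1 s (by omega)
    simp only [Nat.reduceAdd, if_neg (show ¬n - 1 ≤ s by omega)] at hrec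
    have := boundedCount_pos (n := n) (k := 1) (s := s + 1) (by omega) (by omega)
    omega
  | succ k hk ih =>
    refine lt_of_symm_of_lt_succ (fun s hs ↦ boundedCount_symm hs) ?_ hxy hC
    intro s hs
    have hrec := boundedCount_succ_add_one (n := n) k s (by omega)
    have hkn : n - 1 ≤ k * (n - 1) := Nat.le_mul_of_pos_left _ (by omega)
    have hsucc : (k + 1) * (n - 1) = k * (n - 1) + (n - 1) := Nat.succ_mul k (n - 1)
    split_ifs at hrec with h
    · have := ih (x := s - (n - 1)) (y := s + 1) (by omega) (by omega)
      omega
    · have := boundedCount_pos (n := n) (k := k) (s := s + 1) (by omega) (by omega)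
      omega

end BoundedCount

theorem mul_sum_div_add_sum_mod {k : ℕ} (c : Fin k → ℕ) (n : ℕ) :
    n * ∑ t, c t / n + ∑ t, c t % n = ∑ t, c t := by
  rw [mul_sum, ← sum_add_distrib]
  exact sum_congr rfl fun t _ ↦ Nat.div_add_mod (c t) n

theorem card_filter_sum_div_eq {k n : ℕ} (hn : 0 < n) (N q : ℕ) :
    #{c ∈ antidiagonalTuple k N | ∑ t, c t / n = q} =
      (if n * q ≤ N then boundedCount k n (N - n * q) else 0) * #(antidiagonalTuple k q) := by
  split_ifs with hq
  · rw [boundedCount, ← card_product]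
    refine card_nbij' (fun c ↦ (fun t ↦ c t % n, fun t ↦ c t / n)) (fun p t ↦ n * p.2 t + p.1 t)
      (fun c hc ↦ ?_) (fun p hp ↦ ?_) (fun c _ ↦ ?_) (fun p hp ↦ ?_)
    · simp only [mem_coe, mem_filter, mem_antidiagonalTuple] at hc
      have := mul_sum_div_add_sum_mod c n
      simp only [mem_coe, mem_product, boundedTuples, mem_filter, mem_antidiagonalTuple]
      exact ⟨⟨by rw [← hc.2]; omega, fun t ↦ Nat.mod_lt _ hn⟩, hc.2⟩
    · simp only [mem_coe, mem_product, boundedTuples, mem_filter, mem_antidiagonalTuple] at hp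
      obtain ⟨⟨hr, hlt⟩, hq'⟩ := hp
      have hdiv t : (n * p.2 t + p.1 t) / n = p.2 t := by
        rw [Nat.mul_add_div hn, Nat.div_eq_of_lt (hlt t), Nat.add_zero]
      simp only [mem_coe, mem_filter, mem_antidiagonalTuple, hdiv, hq', sum_add_distrib,
        ← mul_sum, hr, and_true]
      omega
    · funext t
      exact Nat.div_add_mod (c t) n
    · simp only [mem_coe, mem_product, boundedTuples, mem_filter] at hp
      ext t
      · simp only [Nat.mul_add_mod, Nat.mod_eq_of_lt (hp.1.2 t)]
      · simp only [Nat.mul_add_div hn, Nat.div_eq_of_lt (hp.1.2 t), Nat.add_zero]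
  · rw [zero_mul, card_eq_zero, filter_eq_empty_iff]
    intro c hc hcq
    rw [mem_antidiagonalTuple] at hc
    have := mul_sum_div_add_sum_mod c n
    rw [hcq, hc] at this
    omega

/-- The guard keeps `j * n - i` from truncating. -/
def veroneseWeight (d n i j : ℕ) : ℕ :=
  if i ≤ j * n then boundedCount (d + 1) n (j * n - i) else 0

section Fibres

variable {d n m i : ℕ}

theorem sub_sum_div_lt_of_mem_antidiagonalTuple (hn : 0 < n) (hi : i ≤ d) {c : Fin (d + 1) → ℕ}
    (hc : c ∈ antidiagonalTuple (d + 1) (n * m - i)) : m - ∑ t, c t / n < d + 1 := by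
  rw [mem_antidiagonalTuple] at hc
  have hdecomp := mul_sum_div_add_sum_mod c n
  have hmod : ∑ t, c t % n ≤ (d + 1) * (n - 1) := by
    simpa using sum_le_card_nsmul univ (fun t ↦ c t % n) (n - 1)
      fun t _ ↦ Nat.le_sub_one_of_lt (Nat.mod_lt (c t) hn)
  have hsucc : n * (d + 1) = (d + 1) * (n - 1) + (d + 1) := by
    rw [mul_comm, ← Nat.mul_succ, Nat.succ_eq_add_one, Nat.sub_add_cancel hn]
  have hlt : n * (m - ∑ t, c t / n) < n * (d + 1) := by
    rw [Nat.mul_sub]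
    omega
  exact Nat.lt_of_mul_lt_mul_left hlt

theorem card_filter_sub_sum_div_eq (hn : 0 < n) (him : i ≤ n * m) {j : ℕ} (hj : j ≤ d) :
    #{c ∈ antidiagonalTuple (d + 1) (n * m - i) | m - ∑ t, c t / n = j} =
      veroneseWeight d n i j * (m + d - j).choose d := by
  rcases le_or_gt j m with hjm | hjm
  · have hfibre : {c ∈ antidiagonalTuple (d + 1) (n * m - i) | m - ∑ t, c t / n = j} =
        {c ∈ antidiagonalTuple (d + 1) (n * m - i) | ∑ t, c t / n = m - j} := by
      refine filter_congr fun c hc ↦ ?_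
      rw [mem_antidiagonalTuple] at hc
      have hdecomp := mul_sum_div_add_sum_mod c n
      have : ∑ t, c t / n ≤ m := Nat.le_of_mul_le_mul_left (by omega) hn
      omega
    have hjn : n * (m - j) = n * m - j * n := by rw [Nat.mul_sub, mul_comm j]
    have hjn' : j * n ≤ n * m := by rw [mul_comm n]; exact Nat.mul_le_mul_right n hjm
    rw [hfibre, card_filter_sum_div_eq hn, card_antidiagonalTuple_succ, veroneseWeight, hjn,
      show m - j + d = m + d - j by omega]
    congr 1
    by_cases hij : i ≤ j * n
    · rw [if_pos (by omega), if_pos hij, show n * m - i - (n * m - j * n) = j * n - i by omega]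
    · rw [if_neg (by omega), if_neg hij]
  · rw [Nat.choose_eq_zero_of_lt (by omega), mul_zero, card_eq_zero, filter_eq_empty_iff]
    intro c _
    omega

theorem choose_mul_add_sub_eq_sum (hn : 0 < n) (hi : i ≤ d) (m : ℕ) :
    (n * m + d - i).choose d =
      ∑ j ∈ range (d + 1), veroneseWeight d n i j * (m + d - j).choose d := by
  by_cases him : i ≤ n * m
  · rw [show n * m + d - i = n * m - i + d by omega, ← card_antidiagonalTuple_succ,
      card_eq_sum_card_fiberwise fun c hc ↦
        mem_range.2 (sub_sum_div_lt_of_mem_antidiagonalTuple hn hi hc)]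
    exact sum_congr rfl fun j hj ↦
      card_filter_sub_sum_div_eq hn him (Nat.le_of_lt_succ (mem_range.1 hj))
  · rw [Nat.choose_eq_zero_of_lt (by omega), eq_comm]
    refine sum_eq_zero fun j hj ↦ ?_
    rw [mem_range] at hj
    rcases le_or_gt j m with hjm | hjm
    · have : j * n ≤ n * m := by rw [mul_comm n]; exact Nat.mul_le_mul_right n hjm
      rw [veroneseWeight, if_neg (by omega), zero_mul]
    · rw [Nat.choose_eq_zero_of_lt (by omega), mul_zero]

end Fibres

/-- The `j`-th coefficient of `U_n h`, see `coeff_eq_veroneseCoeff`. -/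
def veroneseCoeff (d n : ℕ) (h : ℤ[X]) (j : ℕ) : ℤ :=
  ∑ i ∈ range (d + 1), h.coeff i * veroneseWeight d n i j

theorem ehrG_mul_eq_sum {d n : ℕ} (hn : 0 < n) (h : ℤ[X]) (m : ℕ) :
    ehrG d h (n * m) = ∑ j ∈ range (d + 1), veroneseCoeff d n h j * ((m + d - j).choose d : ℤ) := by
  simp only [ehrG, veroneseCoeff, sum_mul]
  rw [sum_comm]
  refine sum_congr rfl fun i hi ↦ ?_
  rw [choose_mul_add_sub_eq_sum hn (Nat.le_of_lt_succ (mem_range.1 hi)) m]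
  push_cast
  rw [mul_sum]
  exact sum_congr rfl fun j _ ↦ by ring

theorem sum_range_mul_choose_eq {d j : ℕ} (a : ℕ → ℤ) (hj : j ≤ d) :
    ∑ i ∈ range (d + 1), a i * ((j + d - i).choose d : ℤ) =
      ∑ i ∈ range j, a i * ((j + d - i).choose d : ℤ) + a j := by
  rw [← sum_range_add_sum_Ico _ (show j + 1 ≤ d + 1 by omega), sum_range_succ,
    Nat.add_sub_cancel_left, Nat.choose_self, Nat.cast_one, mul_one, add_eq_left]
  refine sum_eq_zero fun i hi ↦ ?_
  rw [mem_Ico] at hi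
  rw [Nat.choose_eq_zero_of_lt (by omega), Nat.cast_zero, mul_zero]

theorem eq_of_sum_mul_choose_eq {d : ℕ} {a b : ℕ → ℤ}
    (hab : ∀ m, ∑ i ∈ range (d + 1), a i * ((m + d - i).choose d : ℤ) =
      ∑ i ∈ range (d + 1), b i * ((m + d - i).choose d : ℤ)) {j : ℕ} (hj : j ≤ d) :
    a j = b j := by
  induction j using Nat.strong_induction_on with
  | _ j ih =>
    have hm := hab j
    rw [sum_range_mul_choose_eq a hj, sum_range_mul_choose_eq b hj,
      sum_congr rfl fun i hi ↦ by rw [ih i (mem_range.1 hi) (by rw [mem_range] at hi; omega)]] at hm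
    exact add_left_cancel hm

theorem coeff_eq_veroneseCoeff {d n : ℕ} (hn : 0 < n) {h Uh : ℤ[X]}
    (heq : ∀ m, ehrG d Uh m = ehrG d h (n * m)) {j : ℕ} (hj : j ≤ d) :
    Uh.coeff j = veroneseCoeff d n h j :=
  eq_of_sum_mul_choose_eq (fun m ↦ (heq m).trans (ehrG_mul_eq_sum hn h m)) hj

theorem sum_mul_pos_of_sum_range_nonneg {c M : ℕ → ℤ} {D : ℕ} (hD : 0 < D)
    (hc : ∀ i ≤ D, 0 ≤ ∑ t ∈ range (i + 1), c t) (hM : ∀ i < D, M (i + 1) ≤ M i)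
    (hMD : 0 ≤ M D) (hc0 : 0 < c 0) (hM0 : M 1 < M 0) :
    0 < ∑ i ∈ range (D + 1), c i * M i := by
  have hparts := sum_range_by_parts M c (D + 1)
  simp only [smul_eq_mul, Nat.add_sub_cancel] at hparts
  have hlast : 0 ≤ M D * ∑ t ∈ range (D + 1), c t := mul_nonneg hMD (hc D le_rfl)
  have hsteps : 0 < ∑ i ∈ range D, (M i - M (i + 1)) * ∑ t ∈ range (i + 1), c t := by
    refine sum_pos' (fun i hi ↦ ?_) ⟨0, mem_range.2 hD, ?_⟩
    · rw [mem_range] at hi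
      exact mul_nonneg (sub_nonneg.2 (hM i hi)) (hc i hi.le)
    · simpa using mul_pos (sub_pos.2 hM0) hc0
  have hneg : ∑ i ∈ range D, (M (i + 1) - M i) * ∑ t ∈ range (i + 1), c t =
      -∑ i ∈ range D, (M i - M (i + 1)) * ∑ t ∈ range (i + 1), c t := by
    rw [← sum_neg_distrib]
    exact sum_congr rfl fun i _ ↦ by ring
  rw [sum_congr rfl fun i _ ↦ mul_comm (c i) (M i), hparts, hneg]
  linarith

theorem sum_range_sub_reflect (f : ℕ → ℤ) {D i : ℕ} (hi : i ≤ D + 1) :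
    ∑ t ∈ range i, (f t - f (D - t)) =
      ∑ t ∈ range i, f t + ∑ t ∈ range (D + 1 - i), f t - ∑ t ∈ range (D + 1), f t := by
  induction i with
  | zero => simp
  | succ i ih =>
    rw [sum_range_succ, sum_range_succ, ih (by omega), show D + 1 - i = D - i + 1 by omega,
      sum_range_succ, show D + 1 - (i + 1) = D - i by omega]
    ring

theorem pow_le_two_pow_mul_factorial_mul_choose {d n : ℕ} (hn : 2 * d < n) :
    n ^ d ≤ 2 ^ d * d.factorial * (n - 1).choose d :=
  calc n ^ d ≤ (2 * (n - 1 + 1 - d)) ^ d := Nat.pow_le_pow_left (by omega) d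
    _ = 2 ^ d * (n - 1 + 1 - d) ^ d := mul_pow _ _ _
    _ ≤ 2 ^ d * (n - 1).descFactorial d :=
        Nat.mul_le_mul_left _ (Nat.pow_sub_le_descFactorial _ _)
    _ = 2 ^ d * d.factorial * (n - 1).choose d := by
        rw [Nat.descFactorial_eq_factorial_mul_choose, mul_assoc]

section VeroneseCoeff

variable {d n : ℕ} {h : ℤ[X]}

theorem veroneseWeight_of_pos {i j : ℕ} (hi : i < n) (hj : 0 < j) :
    veroneseWeight d n i j = boundedCount (d + 1) n (j * n - i) :=
  if_pos (by nlinarith)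

theorem veroneseWeight_eq_reflect (hn : d < n) {i j : ℕ} (hi : i ≤ d) (hj : 0 < j) (hjd : j ≤ d) :
    veroneseWeight d n i j = boundedCount (d + 1) n ((d + 1 - j) * n - (d + 1 - i)) := by
  have hjn : j * n + (d + 1 - j) * n = (d + 1) * n := by
    rw [← Nat.add_mul, Nat.add_sub_cancel' (by omega)]
  have hn' : n ≤ j * n := Nat.le_mul_of_pos_left n hj
  have hn'' : n ≤ (d + 1 - j) * n := Nat.le_mul_of_pos_left n (by omega)
  have hsub := Nat.mul_sub_one (d + 1) n
  have hle : d + 1 ≤ (d + 1) * n := Nat.le_mul_of_pos_right _ (by omega)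
  rw [veroneseWeight_of_pos (by omega) hj, ← boundedCount_symm (by omega)]
  congr 1
  omega

theorem veroneseCoeff_zero (hn : 0 < n) : veroneseCoeff d n h 0 = h.coeff 0 := by
  rw [veroneseCoeff, sum_eq_single 0 (fun i _ hi ↦ ?_) (by simp)]
  · simp [veroneseWeight, boundedCount_zero_right _ hn]
  · rw [veroneseWeight, if_neg (by omega), Nat.cast_zero, mul_zero]

theorem veroneseWeight_le_sub (hn : d < n) {i a : ℕ} (hi : i ≤ d) (ha : 2 * a < d) :
    veroneseWeight d n i a ≤ veroneseWeight d n i (d - a) := by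
  have hadd : a * n + (d - a) * n = d * n := by rw [← Nat.add_mul, Nat.add_sub_cancel' (by omega)]
  have hle : a * n ≤ (d - a) * n := Nat.mul_le_mul_right n (by omega)
  have hn' : n ≤ (d - a) * n := Nat.le_mul_of_pos_left n (by omega)
  have hsub := Nat.mul_sub_one (d + 1) n
  have hdn : d * n + n = (d + 1) * n := (Nat.succ_mul d n).symm
  rw [veroneseWeight_of_pos (j := d - a) (by omega) (by omega), veroneseWeight]
  split_ifs with hia
  · exact boundedCount_le_of_le (by omega) (by omega)
  · exact Nat.zero_le _

theorem veroneseWeight_zero_lt_sub (hn : d + 1 < n) {a : ℕ} (ha : 2 * a < d) :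
    veroneseWeight d n 0 a < veroneseWeight d n 0 (d - a) := by
  have hadd : a * n + (d - a) * n = d * n := by rw [← Nat.add_mul, Nat.add_sub_cancel' (by omega)]
  have hlt : a * n < (d - a) * n := Nat.mul_lt_mul_of_pos_right (by omega) (by omega)
  have hsub := Nat.mul_sub_one (d + 1) n
  have hdn : d * n + n = (d + 1) * n := (Nat.succ_mul d n).symm
  simp only [veroneseWeight, Nat.zero_le, if_true, Nat.sub_zero]
  exact boundedCount_lt_of_lt (by omega) (by omega) hlt (by omega)

theorem veroneseCoeff_lt_veroneseCoeff_sub (hn : d + 1 < n) (hpos : ∀ i, 0 ≤ h.coeff i)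
    (h0 : 0 < h.coeff 0) {a : ℕ} (ha : 2 * a < d) :
    veroneseCoeff d n h a < veroneseCoeff d n h (d - a) := by
  refine sum_lt_sum (fun i hi ↦ ?_) ⟨0, mem_range.2 (by omega), ?_⟩
  · exact mul_le_mul_of_nonneg_left
      (Nat.cast_le.2 (veroneseWeight_le_sub (by omega) (Nat.le_of_lt_succ (mem_range.1 hi)) ha))
      (hpos i)
  · exact mul_lt_mul_of_pos_left (Nat.cast_lt.2 (veroneseWeight_zero_lt_sub hn ha)) h0

theorem sum_range_sub_coeff_reflect_nonneg (hd1 : h.coeff (d + 1) = 0) (h0 : 0 ≤ h.coeff 0)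
    (hsum : ∀ i : ℕ, i + 1 ≤ d / 2 →
      ∑ j ∈ Icc (d - i) d, h.coeff j ≤ ∑ j ∈ range (i + 2), h.coeff j)
    {i : ℕ} (hi : i ≤ d + 2) :
    0 ≤ ∑ t ∈ range i, (h.coeff t - h.coeff (d + 1 - t)) := by
  -- the partial sums are symmetric under `i ↦ d + 2 - i`
  have hreflect {i} (hi : i ≤ d + 2) := sum_range_sub_reflect h.coeff hi
  simp only [sum_range_succ _ (d + 1), hd1, add_zero] at hreflect
  have hlow {i} (hi : i ≤ d / 2 + 1) : 0 ≤ ∑ t ∈ range i, (h.coeff t - h.coeff (d + 1 - t)) := by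
    rw [hreflect (by omega)]
    match i, hi with
    | 0, _ => simp [sum_range_succ _ (d + 1), hd1]
    | 1, _ => simpa using h0
    | i + 2, hi =>
      have := hsum i (by omega)
      rw [← Ico_add_one_right_eq_Icc, sum_Ico_eq_sub _ (by omega)] at this
      rw [show d + 1 + 1 - (i + 2) = d - i by omega]
      linarith
  rcases le_or_gt i (d / 2 + 1) with hi' | hi'
  · exact hlow hi'
  · have := hlow (i := d + 2 - i) (by omega)
    rw [hreflect hi, add_comm (∑ t ∈ range i, _)]
    rwa [hreflect (by omega), show d + 1 + 1 - (d + 2 - i) = i by omega] at this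

theorem veroneseCoeff_succ_sub_veroneseCoeff_sub (hn : d < n) (hd1 : h.coeff (d + 1) = 0)
    {a : ℕ} (ha : a < d) :
    veroneseCoeff d n h (a + 1) - veroneseCoeff d n h (d - a) =
      ∑ i ∈ range (d + 2),
        (h.coeff i - h.coeff (d + 1 - i)) * boundedCount (d + 1) n ((a + 1) * n - i) := by
  set M : ℕ → ℤ := fun i ↦ boundedCount (d + 1) n ((a + 1) * n - i)
  have hV₁ : veroneseCoeff d n h (a + 1) = ∑ i ∈ range (d + 2), h.coeff i * M i := by
    rw [sum_range_succ, hd1, zero_mul, add_zero, veroneseCoeff]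
    refine sum_congr rfl fun i hi ↦ ?_
    rw [veroneseWeight_of_pos (by rw [mem_range] at hi; omega) (by omega)]
  have hV₂ : veroneseCoeff d n h (d - a) = ∑ i ∈ range (d + 2), h.coeff (d + 1 - i) * M i :=
    calc veroneseCoeff d n h (d - a) = ∑ i ∈ range (d + 1), h.coeff i * M (d + 1 - i) := by
          refine sum_congr rfl fun i hi ↦ ?_
          rw [veroneseWeight_eq_reflect hn (by rw [mem_range] at hi; omega) (by omega) (by omega),
            show d + 1 - (d - a) = a + 1 by omega]
      _ = ∑ i ∈ range (d + 2), h.coeff i * M (d + 1 - i) := by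
          rw [sum_range_succ _ (d + 1), hd1, zero_mul, add_zero]
      _ = ∑ i ∈ range (d + 2), h.coeff (d + 1 - i) * M i := by
          rw [← sum_range_reflect]
          refine sum_congr rfl fun i hi ↦ ?_
          rw [mem_range] at hi
          rw [show d + 2 - 1 - i = d + 1 - i by omega, show d + 1 - (d + 1 - i) = i by omega]
  rw [hV₁, hV₂, ← sum_sub_distrib]
  exact sum_congr rfl fun i _ ↦ by ring

theorem veroneseCoeff_sub_lt_veroneseCoeff_succ (hn : d + 1 < n) (h0 : 0 < h.coeff 0)
    (hd1 : h.coeff (d + 1) = 0)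
    (hsum : ∀ i : ℕ, i + 1 ≤ d / 2 →
      ∑ j ∈ Icc (d - i) d, h.coeff j ≤ ∑ j ∈ range (i + 2), h.coeff j)
    {a : ℕ} (ha : 2 * a + 1 < d) :
    veroneseCoeff d n h (d - a) < veroneseCoeff d n h (a + 1) := by
  have hdn : 2 * ((a + 1) * n) ≤ d * n := by
    rw [← mul_assoc]
    exact Nat.mul_le_mul_right n (by omega)
  have hsub := Nat.mul_sub_one (d + 1) n
  have hsucc : (d + 1) * n = d * n + n := Nat.succ_mul d n
  have hn' : n ≤ (a + 1) * n := Nat.le_mul_of_pos_left n (by omega)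
  have hpos := sum_mul_pos_of_sum_range_nonneg (c := fun i ↦ h.coeff i - h.coeff (d + 1 - i))
    (M := fun i ↦ boundedCount (d + 1) n ((a + 1) * n - i)) (D := d + 1) (by omega)
    (fun i hi ↦ sum_range_sub_coeff_reflect_nonneg hd1 h0.le hsum (by omega))
    (fun i hi ↦ Nat.cast_le.2 (boundedCount_le_of_le (by omega) (by omega))) (Nat.cast_nonneg _)
    (by simpa [hd1] using h0)
    (Nat.cast_lt.2 (boundedCount_lt_of_lt (by omega) (by omega) (by omega) (by omega)))
  rw [← veroneseCoeff_succ_sub_veroneseCoeff_sub (by omega) hd1 (by omega)] at hpos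
  linarith

theorem veroneseCoeff_le_sum_mul_pow (hpos : ∀ i, 0 ≤ h.coeff i) (j : ℕ) :
    veroneseCoeff d n h j ≤ (∑ i ∈ range (d + 1), h.coeff i) * (n : ℤ) ^ d := by
  rw [veroneseCoeff, sum_mul]
  refine sum_le_sum fun i _ ↦ mul_le_mul_of_nonneg_left ?_ (hpos i)
  rw [veroneseWeight]
  split_ifs
  · exact_mod_cast boundedCount_succ_le_pow d n _
  · positivity

theorem sum_mul_choose_le_veroneseCoeff_self (hn : d < n) (hpos : ∀ i, 0 ≤ h.coeff i) :
    (∑ i ∈ range (d + 1), h.coeff i) * ((n - 1).choose d : ℤ) ≤ veroneseCoeff d n h d := by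
  rw [veroneseCoeff, sum_mul]
  refine sum_le_sum fun i hi ↦ mul_le_mul_of_nonneg_left ?_ (hpos i)
  rw [mem_range] at hi
  have hsub := Nat.mul_sub_one (d + 1) n
  have hsucc : (d + 1) * n = d * n + n := Nat.succ_mul d n
  have hdn : d ≤ d * n := Nat.le_mul_of_pos_right d (by omega)
  rw [veroneseWeight, if_pos (by omega), ← boundedCount_symm (by omega),
    show (d + 1) * (n - 1) - (d * n - i) = n - 1 - d + i by omega,
    boundedCount_succ_eq_choose (by omega)]
  exact_mod_cast Nat.choose_le_choose d (by omega : n - 1 ≤ n - 1 - d + i + d)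

theorem veroneseCoeff_lt_mul_veroneseCoeff_self (hn : 2 * d < n) (hpos : ∀ i, 0 ≤ h.coeff i)
    (h0 : 0 < h.coeff 0) (j : ℕ) :
    veroneseCoeff d n h j < ((2 ^ d * d.factorial + 1 : ℕ) : ℤ) * veroneseCoeff d n h d := by
  have hnum : (n : ℤ) ^ d ≤ 2 ^ d * d.factorial * (n - 1).choose d := by
    exact_mod_cast pow_le_two_pow_mul_factorial_mul_choose hn
  have hlow := sum_mul_choose_le_veroneseCoeff_self (d := d) (n := n) (by omega) hpos
  set T := ∑ i ∈ range (d + 1), h.coeff i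
  set K : ℤ := 2 ^ d * d.factorial
  have hT : 0 < T := h0.trans_le (single_le_sum (fun i _ ↦ hpos i) (mem_range.2 d.succ_pos))
  have hC : 0 < ((n - 1).choose d : ℤ) := by exact_mod_cast Nat.choose_pos (by omega)
  have hK : 0 ≤ K := by positivity
  push_cast
  calc veroneseCoeff d n h j ≤ T * (n : ℤ) ^ d := veroneseCoeff_le_sum_mul_pow hpos j
    _ ≤ T * (K * (n - 1).choose d) := mul_le_mul_of_nonneg_left hnum hT.le
    _ = K * (T * (n - 1).choose d) := by ring
    _ ≤ K * veroneseCoeff d n h d := mul_le_mul_of_nonneg_left hlow hK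
    _ < (K + 1) * veroneseCoeff d n h d := by nlinarith [mul_pos hT hC]

end VeroneseCoeff

theorem chainIdx_two_mul (d a : ℕ) : chainIdx d (2 * a) = a := by
  simp [chainIdx]

theorem chainIdx_two_mul_add_one (d a : ℕ) : chainIdx d (2 * a + 1) = d - a := by
  simp [chainIdx]

theorem stmt4_general (d : ℕ) :
    ∃ md nd : ℕ, 0 < md ∧ 0 < nd ∧
      ∀ (h Uh : Polynomial ℤ) (n : ℕ),
        h.natDegree ≤ d → (∀ i, 0 ≤ h.coeff i) → h.coeff 0 = 1 →
        -- h_0 + ⋯ + h_{i+1} ≥ h_d + ⋯ + h_{d-i} for 0 ≤ i ≤ ⌊d/2⌋ - 1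
        (∀ i : ℕ, i + 1 ≤ d / 2 →
          ∑ j ∈ Finset.Icc (d - i) d, h.coeff j ≤ ∑ j ∈ Finset.range (i + 2), h.coeff j) →
        Uh.natDegree ≤ d → (∀ m : ℕ, ehrG d Uh m = ehrG d h (n * m)) →
        nd ≤ n →
        -- h_0 = h_0(n) < h_d(n) < h_1(n) < h_{d-1}(n) < ⋯ < h_{⌊(d+1)/2⌋}(n) < m_d h_d(n)
        Uh.coeff 0 = h.coeff 0 ∧
        (∀ k, k < d → Uh.coeff (chainIdx d k) < Uh.coeff (chainIdx d (k + 1))) ∧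
        Uh.coeff ((d + 1) / 2) < (md : ℤ) * Uh.coeff d := by
  refine ⟨2 ^ d * d.factorial + 1, 2 * d + 2, by positivity, by omega, ?_⟩
  intro h Uh n hdeg hpos h0 hsum _ heq hn
  have hd1 : h.coeff (d + 1) = 0 := coeff_eq_zero_of_natDegree_lt (by omega)
  have hU {j : ℕ} (hj : j ≤ d) : Uh.coeff j = veroneseCoeff d n h j :=
    coeff_eq_veroneseCoeff (by omega) heq hj
  refine ⟨by rw [hU d.zero_le, veroneseCoeff_zero (by omega)], fun k hk ↦ ?_, ?_⟩
  · obtain ⟨a, rfl | rfl⟩ := Nat.even_or_odd' k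
    · rw [chainIdx_two_mul, chainIdx_two_mul_add_one, hU (by omega), hU (by omega)]
      exact veroneseCoeff_lt_veroneseCoeff_sub (by omega) hpos (by omega) (by omega)
    · rw [chainIdx_two_mul_add_one, show 2 * a + 1 + 1 = 2 * (a + 1) by ring, chainIdx_two_mul,
        hU (by omega), hU (by omega)]
      exact veroneseCoeff_sub_lt_veroneseCoeff_succ (by omega) (by omega) hd1 hsum (by omega)
  · rw [hU (by omega), hU le_rfl]
    exact veroneseCoeff_lt_mul_veroneseCoeff_self (by omega) hpos (by omega) _

theorem stmt4 (d : ℕ) (hd : 0 < d) :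
    ∃ md nd : ℕ, 0 < md ∧ 0 < nd ∧
      ∀ (h Uh : Polynomial ℤ) (n : ℕ),
        h.natDegree ≤ d → (∀ i, 0 ≤ h.coeff i) → h.coeff 0 = 1 →
        -- h_0 + ⋯ + h_{i+1} ≥ h_d + ⋯ + h_{d-i} for 0 ≤ i ≤ ⌊d/2⌋ - 1
        (∀ i : ℕ, i + 1 ≤ d / 2 →
          ∑ j ∈ Finset.Icc (d - i) d, h.coeff j ≤ ∑ j ∈ Finset.range (i + 2), h.coeff j) →
        Uh.natDegree ≤ d → (∀ m : ℕ, ehrG d Uh m = ehrG d h (n * m)) →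
        nd ≤ n →
        -- h_0 = h_0(n) < h_d(n) < h_1(n) < h_{d-1}(n) < ⋯ < h_{⌊(d+1)/2⌋}(n) < m_d h_d(n)
        Uh.coeff 0 = h.coeff 0 ∧
        (∀ k, k < d → Uh.coeff (chainIdx d k) < Uh.coeff (chainIdx d (k + 1))) ∧
        Uh.coeff ((d + 1) / 2) < (md : ℤ) * Uh.coeff d :=
  stmt4_general d
end

section
/- Fix a positive integer d. Every polynomial h(t) = h_0 + h_1 t + ⋯ + h_{d+1} t^{d+1} with integer coefficients has a unique decomposition h(t) = a(t) + b(t), where a(t) and b(t) are polynomials with integer coefficients of degree at most d and at most d+1 respectively, satisfying a(t) = t^d · a(1/t) and b(t) = t^{d+1} · b(1/t); equivalently, writing a(t) = ∑_{i=0}^{d} a_i t^i and b(t) = ∑_{i=0}^{d+1} b_i t^i, one has a_i = a_{d−i} for 0 ≤ i ≤ d and b_i = b_{d+1−i} for 0 ≤ i ≤ d+1. -/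
/-!
Uniqueness: the difference `c` of two decompositions has degree at most `d` and is palindromic
both with respect to `d` and to `d + 1`, so `c_i = c_{d-i} = c_{i+1}` for `i ≤ d`, and
`c_0 = c_{d+1} = 0`; hence `c = 0`.

Existence: solving `h = a + b` coefficient by coefficient gives
`a_i = ∑_{j ≤ i} (h_j - h_{d+1-j})`, and these partial sums are symmetric because the summand
is antisymmetric under the reflection `j ↦ d + 1 - j`.
-/

open Polynomial Finset

namespace Polynomial

variable {R : Type*}

def IsPalindromic [Semiring R] (N : ℕ) (p : R[X]) : Prop :=
  ∀ i ≤ N, p.coeff i = p.coeff (N - i)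

theorem IsPalindromic.sub [Ring R] {N : ℕ} {p q : R[X]} (hp : p.IsPalindromic N)
    (hq : q.IsPalindromic N) : (p - q).IsPalindromic N := fun i hi => by
  simp only [coeff_sub, hp i hi, hq i hi]

theorem eq_zero_of_isPalindromic_of_isPalindromic_succ [Semiring R] {d : ℕ} {p : R[X]}
    (hdeg : p.natDegree ≤ d) (hd : p.IsPalindromic d) (hd₁ : p.IsPalindromic (d + 1)) :
    p = 0 := by
  ext i
  rw [coeff_zero]
  induction i with
  | zero => rw [hd₁ 0 (Nat.zero_le _)]; exact coeff_eq_zero_of_natDegree_lt (by omega)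
  | succ i ih =>
    by_cases hi : i ≤ d
    · rw [hd₁ (i + 1) (by omega), show d + 1 - (i + 1) = d - i by omega, hd (d - i) (by omega),
        Nat.sub_sub_self hi, ih]
    · exact coeff_eq_zero_of_natDegree_lt (by omega)

section Ring

variable [Ring R]

def skewPartialSum (N : ℕ) (p : R[X]) (n : ℕ) : R :=
  ∑ j ∈ range n, (p.coeff j - p.coeff (N - j))

theorem skewPartialSum_succ (N : ℕ) (p : R[X]) (n : ℕ) :
    skewPartialSum N p (n + 1) = skewPartialSum N p n + (p.coeff n - p.coeff (N - n)) :=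
  sum_range_succ _ _

theorem skewPartialSum_eq_of_add_eq {N : ℕ} (p : R[X]) {m n : ℕ} (hmn : m + n = N + 1) :
    skewPartialSum N p m = skewPartialSum N p n := by
  wlog hle : m ≤ n generalizing m n
  · exact (this (by omega) (by omega)).symm
  have hIco : ∑ j ∈ Ico m n, (p.coeff j - p.coeff (N - j)) = 0 := by
    rw [sum_sub_distrib, sum_Ico_reflect (fun j => p.coeff j) m (by omega),
      show N + 1 - n = m by omega, show N + 1 - m = n by omega, sub_self]
  rw [skewPartialSum, skewPartialSum, ← sum_range_add_sum_Ico _ hle, hIco, add_zero]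

/-- The palindromic part of degree at most `d` in the splitting of `p` into palindromes with
respect to `d` and `d + 1`. -/
noncomputable def palindromicPart (d : ℕ) (p : R[X]) : R[X] :=
  ∑ i ∈ range (d + 1), monomial i (skewPartialSum (d + 1) p (i + 1))

variable (d : ℕ) (p : R[X])

theorem coeff_palindromicPart (i : ℕ) :
    (palindromicPart d p).coeff i = if i ≤ d then skewPartialSum (d + 1) p (i + 1) else 0 := by
  simp only [palindromicPart, finsetSum_coeff, coeff_monomial, sum_ite_eq', mem_range,
    Nat.lt_succ_iff]

theorem coeff_palindromicPart_of_le_succ {i : ℕ} (hi : i ≤ d + 1) :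
    (palindromicPart d p).coeff i = skewPartialSum (d + 1) p (i + 1) := by
  rw [coeff_palindromicPart]
  split_ifs with hid
  · rfl
  · rw [show i = d + 1 by omega, skewPartialSum_eq_of_add_eq p (m := d + 1 + 1) (n := 0) rfl]
    rfl

theorem natDegree_palindromicPart_le : (palindromicPart d p).natDegree ≤ d :=
  natDegree_le_iff_coeff_eq_zero.mpr fun i hi => by
    rw [coeff_palindromicPart, if_neg (by omega)]

theorem isPalindromic_palindromicPart : (palindromicPart d p).IsPalindromic d := fun i hi => by
  rw [coeff_palindromicPart_of_le_succ d p (by omega),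
    coeff_palindromicPart_of_le_succ d p (by omega)]
  exact skewPartialSum_eq_of_add_eq p (by omega)

theorem isPalindromic_sub_palindromicPart :
    (p - palindromicPart d p).IsPalindromic (d + 1) := fun i hi => by
  rw [coeff_sub, coeff_sub, coeff_palindromicPart_of_le_succ d p hi,
    coeff_palindromicPart_of_le_succ d p (by omega), skewPartialSum_succ,
    skewPartialSum_eq_of_add_eq p (m := d + 1 - i + 1) (n := i) (by omega)]
  abel

end Ring

end Polynomial

theorem stmt8_general (d : ℕ) (h : Polynomial ℤ) (hdeg : h.natDegree ≤ d + 1) :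
    ∃! ab : Polynomial ℤ × Polynomial ℤ,
      h = ab.1 + ab.2 ∧
      ab.1.natDegree ≤ d ∧ ab.2.natDegree ≤ d + 1 ∧
      (∀ i ≤ d, ab.1.coeff i = ab.1.coeff (d - i)) ∧
      (∀ i ≤ d + 1, ab.2.coeff i = ab.2.coeff (d + 1 - i)) := by
  set a := palindromicPart d h
  have ha_deg : a.natDegree ≤ d := natDegree_palindromicPart_le d h
  refine ⟨(a, h - a), ⟨(add_sub_cancel a h).symm, ha_deg,
    (natDegree_sub_le h a).trans (max_le hdeg (ha_deg.trans (Nat.le_succ d))),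
    isPalindromic_palindromicPart d h, isPalindromic_sub_palindromicPart d h⟩, ?_⟩
  rintro ⟨a', b'⟩ ⟨hsum, ha'deg, -, ha', hb'⟩
  obtain rfl : b' = h - a' := eq_sub_of_add_eq' hsum.symm
  have hdiff : a' - a = 0 := by
    refine eq_zero_of_isPalindromic_of_isPalindromic_succ
      ((natDegree_sub_le a' a).trans (max_le ha'deg ha_deg))
      (IsPalindromic.sub ha' (isPalindromic_palindromicPart d h)) ?_
    rw [show a' - a = (h - a) - (h - a') by abel]
    exact (isPalindromic_sub_palindromicPart d h).sub hb'
  rw [sub_eq_zero.mp hdiff]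

theorem stmt8 (d : ℕ) (hd : 0 < d) (h : Polynomial ℤ) (hdeg : h.natDegree ≤ d + 1) :
    ∃! ab : Polynomial ℤ × Polynomial ℤ,
      h = ab.1 + ab.2 ∧
      ab.1.natDegree ≤ d ∧ ab.2.natDegree ≤ d + 1 ∧
      (∀ i ≤ d, ab.1.coeff i = ab.1.coeff (d - i)) ∧
      (∀ i ≤ d + 1, ab.2.coeff i = ab.2.coeff (d + 1 - i)) :=
  stmt8_general d h hdeg
end

section
/- With the notation of the context, g_d ≥ 1/d!. Furthermore, if h_0 + h_1 + ⋯ + h_i ≥ h_{d+1} + h_d + ⋯ + h_{d+1−i} for all 0 ≤ i ≤ ⌊d/2⌋, with at least one of these inequalities strict, then g_{d−1} ≥ 1/(2·(d−1)!). -/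
/-! Comparing values at `m ≥ 1` identifies `g` with `∑ hᵢ · C(X + d - i, d)`, so
`g_d = (∑ hᵢ) / d!` and `g_{d-1} = ∑ (d + 1 - 2i) hᵢ / (2 (d-1)!)`, both with integer numerators.
The first numerator is positive because `g_d` is. For the second, Abel summation with the partial
sums `U j = h₀ + ⋯ + h_j` gives `∑ (d + 1 - 2i) hᵢ = ∑_{j ≤ d} (U j + U (d - j) - U (d + 1))`, and the
`j`-th term is `(h₀ + ⋯ + h_t) - (h_{d+1-t} + ⋯ + h_{d+1})` for `t = min j (d - j)`: the hypotheses
say exactly that these terms are nonnegative and not all zero. -/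

open Polynomial Finset

open scoped Nat

section ChoosePoly

variable {K : Type*} [Field K]

noncomputable def choosePoly (d : ℕ) (c : K) : K[X] :=
  C (d ! : K)⁻¹ * ∏ j ∈ range d, (X + C (c - j))

theorem eval_choosePoly [CharZero K] {d n : ℕ} {c x : K} (h : x + c = n) :
    (choosePoly d c).eval x = n.choose d := by
  rw [Nat.cast_choose_eq_descPochhammer_div, descPochhammer_eval_eq_prod_range, ← h, choosePoly,
    eval_mul, eval_C, eval_prod, div_eq_inv_mul]
  simp only [eval_add, eval_X, eval_C, add_sub_assoc]

theorem coeff_choosePoly_self (d : ℕ) (c : K) : (choosePoly d c).coeff d = (d ! : K)⁻¹ := by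
  rw [choosePoly, coeff_C_mul, prod_X_add_C_coeff _ _ (by simp)]
  simp

theorem coeff_choosePoly_pred [CharZero K] {d : ℕ} (hd : 0 < d) (c : K) :
    (choosePoly d c).coeff (d - 1) = (2 * c + 1 - d) / (2 * (d - 1)! : K) := by
  have hsum : ∀ n : ℕ, (∑ j ∈ range n, (c - j)) * 2 = n * (2 * c + 1 - n) := by
    intro n
    induction n with
    | zero => simp
    | succ n ih => rw [sum_range_succ, add_mul, ih]; push_cast; ring
  have hfac : (d ! : K) = d * (d - 1)! := by
    rw [← Nat.mul_factorial_pred hd.ne']; push_cast; ring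
  have hd0 : (d : K) ≠ 0 := Nat.cast_ne_zero.2 hd.ne'
  have hfac0 : ((d - 1)! : K) ≠ 0 := Nat.cast_ne_zero.2 (Nat.factorial_ne_zero _)
  rw [choosePoly, coeff_C_mul, prod_X_add_C_coeff _ _ (by simp), card_range,
    Nat.sub_sub_self hd, powersetCard_one, sum_map]
  simp only [Function.Embedding.coeFn_mk, prod_singleton]
  rw [hfac]
  field_simp
  linear_combination hsum d

theorem eq_sum_choosePoly_of_eval [CharZero K] {d : ℕ} (a : ℕ → K) {g : K[X]}
    (hg : ∀ m : ℕ, 1 ≤ m → g.eval (m : K) =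
      ∑ i ∈ range (d + 2), a i * ((m + d - i).choose d : K)) :
    g = ∑ i ∈ range (d + 2), C (a i) * choosePoly d ((d : K) - i) := by
  refine eq_of_infinite_eval_eq _ _ (Set.infinite_of_injective_forall_mem
    (f := fun n : ℕ => ((n + 1 : ℕ) : K)) (Nat.cast_injective.comp (add_left_injective 1))
    fun n => ?_)
  simp only [Set.mem_ofPred_eq, hg (n + 1) (by omega), eval_finsetSum, eval_C_mul]
  refine sum_congr rfl fun i hi => congrArg (a i * ·) (eval_choosePoly ?_).symm
  have hi_le : i ≤ n + 1 + d := by simp at hi; omega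
  push_cast [Nat.cast_sub hi_le]
  ring

end ChoosePoly

section Abel

variable {R : Type*} [CommRing R]

theorem sum_range_sum_range_succ (H : ℕ → R) (n : ℕ) :
    ∑ j ∈ range n, ∑ k ∈ range (j + 1), H k = ∑ k ∈ range n, ((n : R) - k) * H k := by
  induction n with
  | zero => simp
  | succ n ih =>
    have hsplit : ∑ k ∈ range (n + 1), (((n + 1 : ℕ) : R) - k) * H k =
        ∑ k ∈ range (n + 1), (((n : R) - k) * H k + H k) :=
      sum_congr rfl fun _ _ => by push_cast; ring
    rw [sum_range_succ, ih, hsplit, sum_add_distrib, sum_range_succ (fun k => ((n : R) - k) * H k),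
      sub_self, zero_mul, add_zero]

theorem sum_range_succ_sub_two_mul_mul_eq (H : ℕ → R) (n : ℕ) :
    ∑ i ∈ range (n + 1), ((n : R) - 2 * i) * H i =
      ∑ j ∈ range n, (∑ k ∈ range (j + 1), H k + ∑ k ∈ range (n - j), H k -
        ∑ k ∈ range (n + 1), H k) := by
  have hreflect : ∑ j ∈ range n, ∑ k ∈ range (n - j), H k =
      ∑ j ∈ range n, ∑ k ∈ range (j + 1), H k := by
    rw [← sum_range_reflect]
    refine sum_congr rfl fun j hj => ?_
    rw [show n - (n - 1 - j) = j + 1 by grind]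
  have hweights : ∑ i ∈ range n, ((n : R) - 2 * i) * H i =
      ∑ k ∈ range n, (((n : R) - k) * H k + ((n : R) - k) * H k - n * H k) :=
    sum_congr rfl fun _ _ => by ring
  rw [sum_sub_distrib, sum_add_distrib, hreflect, sum_range_sum_range_succ, sum_const, card_range,
    nsmul_eq_mul, sum_range_succ, hweights, sum_sub_distrib, sum_add_distrib, sum_range_succ,
    mul_add, mul_sum]
  ring

variable [LinearOrder R] [IsStrictOrderedRing R]

theorem sum_range_sub_two_mul_mul_pos (H : ℕ → R) (d : ℕ)
    (hle : ∀ i ≤ d / 2, ∑ j ∈ Icc (d + 1 - i) (d + 1), H j ≤ ∑ j ∈ range (i + 1), H j)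
    (hlt : ∃ i ≤ d / 2, ∑ j ∈ Icc (d + 1 - i) (d + 1), H j < ∑ j ∈ range (i + 1), H j) :
    0 < ∑ i ∈ range (d + 2), ((d + 1 : ℕ) - 2 * i : R) * H i := by
  set f : ℕ → R := fun j => ∑ k ∈ range (j + 1), H k + ∑ k ∈ range (d + 1 - j), H k -
    ∑ k ∈ range (d + 2), H k with hf
  have f_eq : ∀ t ≤ d, f t = ∑ k ∈ range (t + 1), H k - ∑ k ∈ Icc (d + 1 - t) (d + 1), H k := by
    intro t ht
    have hsplit : ∑ k ∈ range (d + 2), H k =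
        ∑ k ∈ range (d + 1 - t), H k + ∑ k ∈ Icc (d + 1 - t) (d + 1), H k := by
      rw [← Ico_add_one_right_eq_Icc, sum_range_add_sum_Ico _ (by omega)]; rfl
    rw [hf, hsplit]
    ring
  have f_symm : ∀ j ≤ d, f (d - j) = f j := by
    intro j hj
    simp only [hf, show d - j + 1 = d + 1 - j by omega, show d + 1 - (d - j) = j + 1 by omega]
    ring
  have f_nonneg : ∀ j ≤ d, 0 ≤ f j := by
    intro j hj
    rcases le_or_gt j (d / 2) with hj2 | hj2
    · rw [f_eq j hj, sub_nonneg]; exact hle j hj2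
    · rw [← f_symm j hj, f_eq _ (by omega), sub_nonneg]; exact hle _ (by omega)
  obtain ⟨i, hi, hlt⟩ := hlt
  rw [sum_range_succ_sub_two_mul_mul_eq]
  change 0 < ∑ j ∈ range (d + 1), f j
  refine sum_pos' (fun j hj => f_nonneg j (by simpa [Nat.lt_succ_iff] using hj))
    ⟨i, by simp; omega, ?_⟩
  rw [f_eq i (by omega), sub_pos]
  exact hlt

end Abel

theorem one_div_le_intCast_div {K : Type*} [Field K] [LinearOrder K] [IsStrictOrderedRing K]
    {z : ℤ} (hz : 0 < z) {a : K} (ha : 0 < a) : 1 / a ≤ z / a := by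
  gcongr
  exact_mod_cast Int.le_of_sub_one_lt hz

theorem stmt10_general (d : ℕ) (hd : 0 < d)
    (h : Polynomial ℤ)
    (g : Polynomial ℚ)
    -- g(m) = ∑_{i=0}^{d+1} h_i C(m+d-i, d), valid for all integers m ≥ 1
    (hg : ∀ m : ℕ, 1 ≤ m → g.eval (m : ℚ) =
      ∑ i ∈ Finset.range (d + 2), (h.coeff i : ℚ) * ((m + d - i).choose d : ℚ))
    (hgd : 0 < g.coeff d) :
    (1 : ℚ) / (Nat.factorial d : ℚ) ≤ g.coeff d ∧
    ((∀ i ≤ d / 2,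
        ∑ j ∈ Finset.Icc (d + 1 - i) (d + 1), h.coeff j ≤ ∑ j ∈ Finset.range (i + 1), h.coeff j) →
      (∃ i ≤ d / 2,
        ∑ j ∈ Finset.Icc (d + 1 - i) (d + 1), h.coeff j < ∑ j ∈ Finset.range (i + 1), h.coeff j) →
      (1 : ℚ) / (2 * (Nat.factorial (d - 1) : ℚ)) ≤ g.coeff (d - 1)) := by
  have hrep := eq_sum_choosePoly_of_eval (fun i => (h.coeff i : ℚ)) hg
  have hcoeff : g.coeff d = ((∑ i ∈ range (d + 2), h.coeff i : ℤ) : ℚ) / d ! := by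
    simp [hrep, coeff_choosePoly_self, div_eq_mul_inv, sum_mul]
  have hcoeff_pred : g.coeff (d - 1) =
      ((∑ i ∈ range (d + 2), ((d + 1 : ℕ) - 2 * i : ℤ) * h.coeff i : ℤ) : ℚ) / (2 * (d - 1)!) := by
    rw [hrep, finsetSum_coeff]
    simp only [coeff_C_mul, coeff_choosePoly_pred hd]
    push_cast
    rw [sum_div]
    exact sum_congr rfl fun i _ => by ring
  refine ⟨?_, fun hle hlt => ?_⟩
  · rw [hcoeff] at hgd ⊢
    exact one_div_le_intCast_div (by exact_mod_cast (div_pos_iff_of_pos_right (by positivity)).1 hgd)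
      (by positivity)
  · rw [hcoeff_pred]
    exact one_div_le_intCast_div (sum_range_sub_two_mul_mul_pos _ d hle hlt) (by positivity)

theorem stmt10 (d : ℕ) (hd : 0 < d)
    (h : Polynomial ℤ) (hne : h ≠ 0) (hdeg : h.natDegree ≤ d + 1)
    (g : Polynomial ℚ)
    -- g(m) = ∑_{i=0}^{d+1} h_i C(m+d-i, d), valid for all integers m ≥ 1
    (hg : ∀ m : ℕ, 1 ≤ m → g.eval (m : ℚ) =
      ∑ i ∈ Finset.range (d + 2), (h.coeff i : ℚ) * ((m + d - i).choose d : ℚ))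
    (hgd : 0 < g.coeff d) :
    (1 : ℚ) / (Nat.factorial d : ℚ) ≤ g.coeff d ∧
    ((∀ i ≤ d / 2,
        ∑ j ∈ Finset.Icc (d + 1 - i) (d + 1), h.coeff j ≤ ∑ j ∈ Finset.range (i + 1), h.coeff j) →
      (∃ i ≤ d / 2,
        ∑ j ∈ Finset.Icc (d + 1 - i) (d + 1), h.coeff j < ∑ j ∈ Finset.range (i + 1), h.coeff j) →
      (1 : ℚ) / (2 * (Nat.factorial (d - 1) : ℚ)) ≤ g.coeff (d - 1)) :=
  stmt10_general d hd h g hg hgd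
end

section
/- For every polynomial h(t) of degree at most d with integer coefficients and every positive integer n, U_n h(t) = E_n( h(t) · (1 + t + ⋯ + t^{n−1})^{d+1} ). -/
/-! Write `G_M = 1 + t + ⋯ + t^(M-1)` and `I = (1 - t)^(-(d+1))`. For `deg p ≤ d`, `ehrG d p m` is
the `m`-th coefficient of `p · I`, and `I` is a unit, so `p` is determined by `ehrG d p`. Below
degree `M` the series `I` agrees with `G_M^(d+1)`, and `G_(nM) = G_n · G_M(tⁿ)`. Hence the
coefficient of `t^(nm)` in `h · I` is that of `t^(nm)` in `(h · G_n^(d+1)) · G_(m+1)(tⁿ)^(d+1)`,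
i.e. that of `t^m` in `E_n(h · G_n^(d+1)) · G_(m+1)^(d+1)`, which is `ehrG` of `E_n(h · G_n^(d+1))`
at `m`. -/

open Polynomial

/-- The polynomial `1 + t + ⋯ + t^{n-1}`. -/
noncomputable def geomPoly (n : ℕ) : Polynomial ℤ :=
  ∑ j ∈ Finset.range n, X ^ j

/-- The operator `E_n`: discards terms whose exponent is not divisible by `n` and divides
each remaining exponent by `n`, i.e. `(E_n p).coeff k = p.coeff (n * k)`. -/
noncomputable def Eop (n : ℕ) (p : Polynomial ℤ) : Polynomial ℤ :=
  ∑ k ∈ Finset.range (p.natDegree + 1), C (p.coeff (n * k)) * X ^ k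

open scoped PowerSeries

lemma Eop_eq_contract (n : ℕ) (p : ℤ[X]) : Eop n p = contract n p := by
  simp only [Eop, contract, C_mul_X_pow_eq_monomial, mul_comm n]

lemma ehrG_eq_coeff_mul_invOneSubPow {d : ℕ} {p : ℤ[X]} (hp : p.natDegree ≤ d) (m : ℕ) :
    ehrG d p m = PowerSeries.coeff m ((p : ℤ⟦X⟧) * (PowerSeries.invOneSubPow ℤ (d + 1)).val) := by
  conv_rhs => rw [p.as_sum_range_C_mul_X_pow' (Nat.lt_succ_of_le hp)]
  rw [← coeToPowerSeries.ringHom_apply, map_sum, Finset.sum_mul, map_sum]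
  refine Finset.sum_congr rfl fun i hi => ?_
  rw [coeToPowerSeries.ringHom_apply, coe_mul, coe_pow, coe_C, coe_X, mul_assoc,
    PowerSeries.coeff_C_mul, PowerSeries.coeff_X_pow_mul',
    PowerSeries.invOneSubPow_val_succ_eq_mk_add_choose, PowerSeries.coeff_mk]
  split_ifs with him
  · rw [Nat.add_comm d, Nat.sub_add_comm him]
  · have hid := Finset.mem_range.mp hi
    rw [Nat.choose_eq_zero_of_lt (by omega), Nat.cast_zero, mul_zero]

lemma eq_of_ehrG_eq {d : ℕ} {p q : ℤ[X]} (hp : p.natDegree ≤ d) (hq : q.natDegree ≤ d)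
    (h : ∀ m, ehrG d p m = ehrG d q m) : p = q := by
  have hmul : (p : ℤ⟦X⟧) * (PowerSeries.invOneSubPow ℤ (d + 1)).val
      = q * (PowerSeries.invOneSubPow ℤ (d + 1)).val := PowerSeries.ext fun m => by
    rw [← ehrG_eq_coeff_mul_invOneSubPow hp, ← ehrG_eq_coeff_mul_invOneSubPow hq, h]
  exact coe_inj.mp (Units.mul_left_inj _ |>.mp hmul)

lemma PowerSeries.coeff_eq_of_X_pow_dvd_sub {R : Type*} [CommRing R] {M k : ℕ} {φ ψ : R⟦X⟧}
    (h : PowerSeries.X ^ M ∣ φ - ψ) (hk : k < M) : coeff k φ = coeff k ψ := by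
  rw [← sub_eq_zero, ← map_sub]
  exact PowerSeries.X_pow_dvd_iff.mp h k hk

lemma X_pow_dvd_coe_geomPoly_pow_sub_invOneSubPow (M e : ℕ) :
    PowerSeries.X ^ M ∣ (geomPoly M : ℤ⟦X⟧) ^ e - (PowerSeries.invOneSubPow ℤ e).val := by
  have hgeom : (geomPoly M : ℤ⟦X⟧) * (1 - PowerSeries.X) = 1 - PowerSeries.X ^ M := by
    rw [← geom_sum_mul_neg, geomPoly, ← coeToPowerSeries.ringHom_apply, map_sum]
    simp [coe_X]
  have hpow : (geomPoly M : ℤ⟦X⟧) ^ e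
      = (1 - PowerSeries.X ^ M) ^ e * (PowerSeries.invOneSubPow ℤ e).val := by
    rw [← hgeom, mul_pow, mul_assoc, ← PowerSeries.invOneSubPow_inv_eq_one_sub_pow,
      Units.inv_val, mul_one]
  rw [hpow, ← sub_one_mul]
  refine dvd_mul_of_dvd_left ?_ _
  have h := sub_dvd_pow_sub_pow (1 - PowerSeries.X ^ M : ℤ⟦X⟧) 1 e
  rwa [sub_sub_cancel_left, neg_dvd, one_pow] at h

lemma coeff_mul_geomPoly_pow {d M k : ℕ} {p : ℤ[X]} (hp : p.natDegree ≤ d) (hk : k < M) :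
    (p * geomPoly M ^ (d + 1)).coeff k = ehrG d p k := by
  rw [← coeff_coe, coe_mul, coe_pow, ehrG_eq_coeff_mul_invOneSubPow hp]
  exact PowerSeries.coeff_eq_of_X_pow_dvd_sub
    (mul_sub (p : ℤ⟦X⟧) _ _ ▸ dvd_mul_of_dvd_right
      (X_pow_dvd_coe_geomPoly_pow_sub_invOneSubPow M (d + 1)) _) hk

lemma geomPoly_mul_expand_geomPoly (n N : ℕ) :
    geomPoly n * expand ℤ n (geomPoly N) = geomPoly (n * N) := by
  have hgeom (M : ℕ) : geomPoly M * (X - 1) = X ^ M - 1 := geom_sum_mul X M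
  refine mul_right_cancel₀ (X_sub_C_ne_zero 1) ?_
  rw [C_1]
  calc geomPoly n * expand ℤ n (geomPoly N) * (X - 1)
      = geomPoly n * (X - 1) * expand ℤ n (geomPoly N) := mul_right_comm _ _ _
    _ = expand ℤ n (geomPoly N * (X - 1)) := by
      rw [hgeom, map_mul, map_sub, expand_X, map_one, mul_comm]
    _ = geomPoly (n * N) * (X - 1) := by
      rw [hgeom, hgeom, map_sub, map_pow, expand_X, map_one, ← pow_mul]

lemma natDegree_geomPoly_le (n : ℕ) : (geomPoly n).natDegree ≤ n - 1 :=
  natDegree_sum_le_of_forall_le _ _ fun j hj =>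
    (natDegree_X_pow_le j).trans (Nat.le_sub_one_of_lt (Finset.mem_range.mp hj))

lemma natDegree_contract_le {R : Type*} [CommSemiring R] {n : ℕ} (hn : n ≠ 0) (f : R[X]) :
    (contract n f).natDegree ≤ f.natDegree / n := by
  refine natDegree_le_iff_coeff_eq_zero.mpr fun k hk => ?_
  rw [coeff_contract hn]
  exact coeff_eq_zero_of_natDegree_lt ((Nat.div_lt_iff_lt_mul (Nat.pos_of_ne_zero hn)).mp hk)

lemma natDegree_contract_mul_geomPoly_pow_le {d n : ℕ} (hn : n ≠ 0) {h : ℤ[X]}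
    (hh : h.natDegree ≤ d) : (contract n (h * geomPoly n ^ (d + 1))).natDegree ≤ d := by
  have hdeg : (h * geomPoly n ^ (d + 1)).natDegree ≤ d + (d + 1) * (n - 1) :=
    natDegree_mul_le.trans (add_le_add hh (natDegree_pow_le.trans
      (Nat.mul_le_mul_left _ (natDegree_geomPoly_le n))))
  refine (natDegree_contract_le hn _).trans (Nat.lt_succ_iff.mp ?_)
  rw [Nat.div_lt_iff_lt_mul (Nat.pos_of_ne_zero hn)]
  obtain ⟨k, rfl⟩ := Nat.exists_eq_succ_of_ne_zero hn
  simp only [Nat.succ_sub_one] at hdeg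
  nlinarith

lemma ehrG_mul_eq_ehrG_contract {d n : ℕ} (hn : n ≠ 0) {h : ℤ[X]} (hh : h.natDegree ≤ d)
    (m : ℕ) : ehrG d h (n * m) = ehrG d (contract n (h * geomPoly n ^ (d + 1))) m := calc
  ehrG d h (n * m) = (h * geomPoly (n * (m + 1)) ^ (d + 1)).coeff (m * n) := by
    rw [mul_comm m, coeff_mul_geomPoly_pow hh]
    exact Nat.mul_lt_mul_of_pos_left (lt_add_one m) (Nat.pos_of_ne_zero hn)
  _ = (h * geomPoly n ^ (d + 1) * expand ℤ n (geomPoly (m + 1) ^ (d + 1))).coeff (m * n) := by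
    rw [← geomPoly_mul_expand_geomPoly, mul_pow, map_pow, mul_assoc]
  _ = ehrG d (contract n (h * geomPoly n ^ (d + 1))) m := by
    rw [← coeff_contract hn, contract_mul_expand hn,
      coeff_mul_geomPoly_pow (natDegree_contract_mul_geomPoly_pow_le hn hh) (lt_add_one m)]

theorem stmt12_general (d : ℕ)
    (h : Polynomial ℤ) (hdeg : h.natDegree ≤ d)
    (n : ℕ) (hn : 0 < n)
    (Uh : Polynomial ℤ) (hUdeg : Uh.natDegree ≤ d)
    (hU : ∀ m : ℕ, ehrG d Uh m = ehrG d h (n * m)) :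
    Uh = Eop n (h * geomPoly n ^ (d + 1)) := by
  rw [Eop_eq_contract]
  exact eq_of_ehrG_eq hUdeg (natDegree_contract_mul_geomPoly_pow_le hn.ne' hdeg)
    fun m => (hU m).trans (ehrG_mul_eq_ehrG_contract hn.ne' hdeg m)

theorem stmt12 (d : ℕ) (hd : 0 < d)
    (h : Polynomial ℤ) (hdeg : h.natDegree ≤ d)
    (n : ℕ) (hn : 0 < n)
    (Uh : Polynomial ℤ) (hUdeg : Uh.natDegree ≤ d)
    (hU : ∀ m : ℕ, ehrG d Uh m = ehrG d h (n * m)) :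
    Uh = Eop n (h * geomPoly n ^ (d + 1)) :=
  stmt12_general d h hdeg n hn Uh hUdeg hU
end

section
/- For every polynomial h(t) of degree at most d with integer coefficients and every positive integer n, writing the associated polynomial g as g(m) = ∑_{j=0}^{d} g_j m^j, one has the identity U_n h(t) = ∑_{j=0}^{d} g_j · A_j(t) · (1−t)^{d−j} · n^j. -/
/-!
Both sides are polynomials of degree at most `d`, and such a polynomial `p` is determined by
the values `ehrG d p m = ∑ pᵢ C(m+d-i, d)` for `m = 0, …, d`, since this system is
unitriangular. For the left side these values are `g(nm) = ∑ gⱼ nʲ mʲ`. For the right side,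
Pascal's rule gives `ehrG (d+1) ((1-t) p) = ehrG d p`, so `A_j(t) (1-t)^(d-j)` has the values
of `A_j` at level `j`, which are `mʲ` by Worpitzky's identity `mʲ = ∑ A(j,i) C(m+j-i, j)`.

Worpitzky's identity comes from sorting: the maps `f : [j] → [m]` sorted by a permutation `w`
with `k` descents are those for which `f ∘ w` is weakly increasing, strictly at the descents
of `w`. Adding to each value the number of earlier non-descents makes `f ∘ w` strictly
increasing with values in `[m + j - 1 - k]`, so there are `C(m + j - 1 - k, j)` of them.
-/

open Polynomial

/-- The number of descents of a permutation `w` of `{0, …, d-1}`. -/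
noncomputable def numDescents (d : ℕ) (w : Equiv.Perm (Fin d)) : ℕ :=
  Nat.card {j : Fin d // ∃ hj : (j : ℕ) + 1 < d, w ⟨(j : ℕ) + 1, hj⟩ < w j}

/-- The Eulerian number `A(d, i)`: the number of permutations of `d` elements with
exactly `i - 1` descents (with the convention `A(d, 0) = 0`). -/
noncomputable def eulerianNumber (d i : ℕ) : ℕ :=
  if i = 0 then 0 else Nat.card {w : Equiv.Perm (Fin d) // numDescents d w = i - 1}

/-- The Eulerian polynomial `A_d(t) = ∑_{i=1}^{d} A(d,i) tⁱ`, with `A_0(t) = 1`,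
as a polynomial with rational coefficients. -/
noncomputable def eulerianPolyQ (d : ℕ) : Polynomial ℚ :=
  if d = 0 then 1 else ∑ i ∈ Finset.Icc 1 d, C ((eulerianNumber d i : ℚ)) * X ^ i

open Finset

theorem Fin.card_strictMono (n M : ℕ) :
    Nat.card {b : Fin n → Fin M // StrictMono b} = M.choose n := by
  classical
  rw [Nat.card_eq_fintype_card, Fintype.card_subtype,
    show M.choose n = #(powersetCard n (univ : Finset (Fin M))) by simp]
  refine card_bij' (fun b _ ↦ univ.image b)
    (fun s hs ↦ s.orderEmbOfFin (by simpa using (mem_powersetCard_univ.mp hs))) ?_ ?_ ?_ ?_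
  · intro b hb
    rw [mem_powersetCard_univ, card_image_of_injective _ (mem_filter.mp hb).2.injective,
      card_univ, Fintype.card_fin]
  · intro s _
    exact mem_filter.mpr ⟨mem_univ _, (s.orderEmbOfFin _).strictMono⟩
  · intro b hb
    exact (orderEmbOfFin_unique _ (fun x ↦ mem_image_of_mem _ (mem_univ x))
      (mem_filter.mp hb).2).symm
  · intro s _
    apply Finset.coe_injective
    rw [coe_image, coe_univ, Set.image_univ, range_orderEmbOfFin]

theorem Fin.partialSum_last {M : Type*} [AddCommMonoid M] {n : ℕ} (f : Fin n → M) :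
    partialSum f (last n) = ∑ i, f i := by
  simp [partialSum, List.take_of_length_le, List.sum_ofFn]

section StepSequences

variable {k : ℕ} {e : Fin k → ℕ} {s : Fin (k + 1) → ℕ}

private lemma strictMono_add_iff_castSucc_add_le_succ (he : ∀ j, e j ≤ 1)
    (hs : ∀ j, s j.succ = s j.castSucc + (1 - e j)) (a : Fin (k + 1) → ℕ) :
    StrictMono (a + s) ↔ ∀ j, a j.castSucc + e j ≤ a j.succ := by
  rw [Fin.strictMono_iff_lt_succ]
  refine forall_congr' fun j ↦ ?_
  simp only [Pi.add_apply, hs]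
  have := he j
  omega

private lemma le_apply_of_strictMono (hs₀ : s 0 = 0)
    (hs : ∀ j, s j.succ = s j.castSucc + (1 - e j)) {b : Fin (k + 1) → ℕ} (hb : StrictMono b)
    (i : Fin (k + 1)) : s i ≤ b i := by
  induction i using Fin.induction with
  | zero => simp [hs₀]
  | succ j ih =>
    have := hb (Fin.castSucc_lt_succ (i := j))
    rw [hs]
    omega

theorem card_castSucc_add_le_succ (m : ℕ) (he : ∀ j, e j ≤ 1) :
    Nat.card {a : Fin (k + 1) → Fin m // ∀ j, (a j.castSucc : ℕ) + e j ≤ a j.succ} =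
      (m + k - ∑ j, e j).choose (k + 1) := by
  -- `s i` counts the steps before `i` at which `a` need not rise; `a ↦ a + s` is the bijection.
  obtain ⟨s, hs₀, hs, hs_last⟩ : ∃ s : Fin (k + 1) → ℕ, s 0 = 0 ∧
      (∀ j, s j.succ = s j.castSucc + (1 - e j)) ∧ s (Fin.last k) + ∑ j, e j = k := by
    refine ⟨Fin.partialSum fun j ↦ 1 - e j, by simp, Fin.partialSum_succ _, ?_⟩
    rw [Fin.partialSum_last, ← sum_add_distrib,
      sum_congr rfl fun j _ ↦ Nat.sub_add_cancel (he j), sum_const, card_univ, Fintype.card_fin,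
      smul_eq_mul, mul_one]
  have hmono {a : Fin (k + 1) → ℕ} (ha : ∀ j, a j.castSucc + e j ≤ a j.succ) : Monotone a :=
    Fin.monotone_iff_le_succ.2 fun j ↦ (Nat.le_add_right _ _).trans (ha j)
  have hup {a : Fin (k + 1) → ℕ} (ha : ∀ j, a j.castSucc + e j ≤ a j.succ) :
      StrictMono (a + s) :=
    (strictMono_add_iff_castSucc_add_le_succ he hs a).2 ha
  have hshift {b : Fin (k + 1) → ℕ} (hb : StrictMono b) :
      ∀ j, (b - s) j.castSucc + e j ≤ (b - s) j.succ := by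
    refine (strictMono_add_iff_castSucc_add_le_succ he hs _).1 ?_
    rwa [tsub_add_cancel_of_le fun i ↦ le_apply_of_strictMono hs₀ hs hb i]
  rw [show m + k - ∑ j, e j = m + s (Fin.last k) by omega, ← Fin.card_strictMono]
  refine Nat.card_congr
    { toFun := fun a ↦ ⟨fun i ↦ ⟨a.1 i + s i, ?_⟩, fun i i' hi ↦ ?_⟩
      invFun := fun b ↦ ⟨fun i ↦ ⟨b.1 i - s i, ?_⟩, ?_⟩
      left_inv := fun a ↦ ?_
      right_inv := fun b ↦ ?_ }
  · have := (hup (a := fun i ↦ a.1 i) a.2).monotone (Fin.le_last i)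
    simp only [Pi.add_apply] at this
    omega
  · exact hup (a := fun i ↦ a.1 i) a.2 hi
  · have hb := Fin.val_strictMono.comp b.2
    have := hmono (hshift hb) (Fin.le_last i)
    have := le_apply_of_strictMono hs₀ hs hb (Fin.last k)
    have := (b.1 (Fin.last k)).isLt
    simp only [Pi.sub_apply, Function.comp_apply] at *
    omega
  · exact hshift (Fin.val_strictMono.comp b.2)
  · ext i; simp
  · have := le_apply_of_strictMono hs₀ hs (Fin.val_strictMono.comp b.2)
    ext i
    simpa using Nat.sub_add_cancel (this i)

end StepSequences

theorem Tuple.eq_sort_iff_castSucc_succ {α : Type*} [LinearOrder α] {k : ℕ}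
    {f : Fin (k + 1) → α} {σ : Equiv.Perm (Fin (k + 1))} :
    σ = Tuple.sort f ↔ ∀ j : Fin k, f (σ j.castSucc) ≤ f (σ j.succ) ∧
      (σ j.succ < σ j.castSucc → f (σ j.castSucc) < f (σ j.succ)) := by
  rw [Tuple.eq_sort_iff', Fin.strictMono_iff_lt_succ]
  refine forall_congr' fun j ↦ ?_
  have hne : σ j.castSucc ≠ σ j.succ := σ.injective.ne (Fin.castSucc_lt_succ).ne
  change toLex (f (σ j.castSucc), σ j.castSucc) < toLex (f (σ j.succ), σ j.succ) ↔ _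
  rw [Prod.Lex.toLex_lt_toLex]
  grind

theorem numDescents_succ_eq_card (k : ℕ) (w : Equiv.Perm (Fin (k + 1))) :
    numDescents (k + 1) w = #{j : Fin k | w j.succ < w j.castSucc} := by
  rw [numDescents, ← Fintype.card_subtype, ← Nat.card_eq_fintype_card]
  refine Nat.card_congr
    { toFun := fun j ↦ ⟨⟨j.1, by obtain ⟨hj, -⟩ := j.2; omega⟩, ?_⟩
      invFun := fun j ↦ ⟨j.1.castSucc, by simp, ?_⟩
      left_inv := fun j ↦ rfl
      right_inv := fun j ↦ rfl }
  · exact j.2.2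
  · exact j.2

theorem card_sort_eq (m k : ℕ) (w : Equiv.Perm (Fin (k + 1))) :
    Nat.card {f : Fin (k + 1) → Fin m // Tuple.sort f = w} =
      (m + k - numDescents (k + 1) w).choose (k + 1) := by
  rw [numDescents_succ_eq_card, card_filter,
    ← card_castSucc_add_le_succ m fun j ↦ by split_ifs <;> simp]
  refine Nat.card_congr
    (Equiv.subtypeEquiv (Equiv.arrowCongr w.symm (Equiv.refl (Fin m))) fun f ↦ ?_)
  rw [eq_comm, Tuple.eq_sort_iff_castSucc_succ]
  refine forall_congr' fun j ↦ ?_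
  simp only [Equiv.arrowCongr_apply, Equiv.symm_symm, Equiv.coe_refl, Function.comp_apply, id]
  by_cases h : w j.succ < w j.castSucc
  · simp only [h, if_true, forall_const, Fin.le_def, Fin.lt_def]
    omega
  · simp only [h, if_false, false_imp_iff, and_true, add_zero, Fin.le_def]

theorem eulerianNumber_eq_card {d i : ℕ} (hi : i ≠ 0) :
    eulerianNumber d i = #{w : Equiv.Perm (Fin d) | numDescents d w + 1 = i} := by
  rw [eulerianNumber, if_neg hi, ← Fintype.card_subtype, ← Nat.card_eq_fintype_card]
  exact Nat.card_congr (Equiv.subtypeEquivRight fun w ↦ by omega)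

theorem pow_eq_sum_eulerianNumber_mul_choose (k m : ℕ) :
    m ^ (k + 1) = ∑ i ∈ Icc 1 (k + 1),
      eulerianNumber (k + 1) i * (m + (k + 1) - i).choose (k + 1) := by
  calc m ^ (k + 1) = ∑ w : Equiv.Perm (Fin (k + 1)),
        Nat.card {f : Fin (k + 1) → Fin m // Tuple.sort f = w} := by
        rw [← Nat.card_sigma, Nat.card_congr (Equiv.sigmaFiberEquiv Tuple.sort)]
        simp
    _ = ∑ i ∈ Icc 1 (k + 1),
          ∑ w : Equiv.Perm (Fin (k + 1)) with numDescents (k + 1) w + 1 = i,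
            (m + k - numDescents (k + 1) w).choose (k + 1) := by
        simp only [card_sort_eq]
        refine (sum_fiberwise_of_maps_to (fun w _ ↦ ?_) _).symm
        rw [mem_Icc, numDescents_succ_eq_card]
        have := card_filter_le univ fun j : Fin k ↦ w j.succ < w j.castSucc
        simp only [card_univ, Fintype.card_fin] at this
        omega
    _ = _ := by
        refine sum_congr rfl fun i hi ↦ ?_
        rw [eulerianNumber_eq_card (by simp at hi; omega), ← smul_eq_mul, ← sum_const]
        refine sum_congr rfl fun w hw ↦ ?_
        rw [(mem_filter.1 hw).2.symm]
        congr 1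
        omega

section ehrG

variable (R : Type*) [CommRing R]

def ehrGₗ (d : ℕ) : R[X] →ₗ[R] ℕ → R where
  toFun p m := ∑ i ∈ range (d + 1), p.coeff i * ((m + d - i).choose d : R)
  map_add' p q := by ext m; simp [add_mul, sum_add_distrib]
  map_smul' c p := by ext m; simp [mul_sum, mul_assoc]

variable {R}

theorem ehrGₗ_apply (d : ℕ) (p : R[X]) (m : ℕ) :
    ehrGₗ R d p m = ∑ i ∈ range (d + 1), p.coeff i * ((m + d - i).choose d : R) := rfl

theorem ehrGₗ_map {S : Type*} [CommRing S] (f : R →+* S) (d : ℕ) (p : R[X]) (m : ℕ) :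
    ehrGₗ S d (p.map f) m = f (ehrGₗ R d p m) := by
  simp [ehrGₗ_apply, coeff_map]

theorem ehrGₗ_X_pow {d i : ℕ} (hi : i ≤ d) (m : ℕ) :
    ehrGₗ R d (X ^ i) m = (m + d - i).choose d := by
  rw [ehrGₗ_apply, sum_eq_single i] <;> simp [coeff_X_pow] <;> grind

theorem ehrGₗ_one_sub_X_mul {d : ℕ} {p : R[X]} (hp : p.natDegree ≤ d) :
    ehrGₗ R (d + 1) ((1 - X) * p) = ehrGₗ R d p := by
  have hX (i : ℕ) (hi : i ≤ d) : ehrGₗ R (d + 1) ((1 - X) * X ^ i) = ehrGₗ R d (X ^ i) := by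
    ext m
    rw [sub_mul, one_mul, ← pow_succ', map_sub, Pi.sub_apply, ehrGₗ_X_pow (by omega),
      ehrGₗ_X_pow (by omega), ehrGₗ_X_pow hi, sub_eq_iff_eq_add,
      show m + (d + 1) - (i + 1) = m + d - i by omega,
      show m + (d + 1) - i = m + d - i + 1 by omega, Nat.choose_succ_succ', Nat.cast_add, add_comm]
  rw [p.as_sum_range_C_mul_X_pow' (Nat.lt_succ_of_le hp), mul_sum, map_sum, map_sum]
  refine sum_congr rfl fun i hi ↦ ?_
  rw [← smul_eq_C_mul, mul_smul_comm, map_smul, map_smul,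
    hX i (Nat.le_of_lt_succ (mem_range.1 hi))]

theorem eq_of_ehrGₗ_eq {d : ℕ} {p q : R[X]} (hp : p.natDegree ≤ d) (hq : q.natDegree ≤ d)
    (h : ∀ m ≤ d, ehrGₗ R d p m = ehrGₗ R d q m) : p = q := by
  rw [← sub_eq_zero]
  set r := p - q
  have hr : r.natDegree ≤ d := (natDegree_sub_le p q).trans (max_le hp hq)
  have h₀ : ∀ m ≤ d, ehrGₗ R d r m = 0 := fun m hm ↦ by simp [r, h m hm]
  -- `ehrGₗ R d r m` involves only `r.coeff i` for `i ≤ m`, with coefficient `1` at `i = m`.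
  have htriang (m : ℕ) (hm : m ≤ d) (hlow : ∀ i < m, r.coeff i = 0) :
      ehrGₗ R d r m = r.coeff m := by
    rw [ehrGₗ_apply, sum_eq_single m]
    · simp
    · intro i hid hne
      rcases hne.lt_or_gt with hi | hi
      · simp [hlow i hi]
      · have := mem_range.1 hid
        simp [Nat.choose_eq_zero_of_lt (show m + d - i < d by omega)]
    · simp
      omega
  have hcoeff (m : ℕ) : m ≤ d → r.coeff m = 0 := by
    induction m using Nat.strong_induction_on with
    | _ m ih =>
      exact fun hm ↦ (htriang m hm fun i hi ↦ ih i hi (by omega)).symm.trans (h₀ m hm)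
  ext m
  by_cases hm : m ≤ d
  · exact hcoeff m hm
  · exact coeff_eq_zero_of_natDegree_lt (by omega)

end ehrG

theorem ehrG_eq_ehrGₗ (d : ℕ) (p : ℤ[X]) (m : ℕ) : ehrG d p m = ehrGₗ ℤ d p m := rfl

section CharZero

variable {K : Type*} [Field K] [CharZero K]

theorem exists_natDegree_le_eval_natCast_eq_choose (d s : ℕ) :
    ∃ q : K[X], q.natDegree ≤ d ∧ ∀ m : ℕ, q.eval (m : K) = (m + s).choose d := by
  refine ⟨C (d.factorial : K)⁻¹ * (descPochhammer K d).comp (X + C (s : K)),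
    natDegree_C_mul_le _ _ |>.trans ?_, fun m ↦ ?_⟩
  · rw [natDegree_comp, descPochhammer_natDegree, natDegree_X_add_C, mul_one]
  · have : (d.factorial : K) ≠ 0 := Nat.cast_ne_zero.2 d.factorial_ne_zero
    rw [eval_mul, eval_C, eval_comp, eval_add, eval_X, eval_C, ← Nat.cast_add,
      descPochhammer_eval_eq_descFactorial, Nat.descFactorial_eq_factorial_mul_choose,
      Nat.cast_mul, inv_mul_cancel_left₀ this]

theorem natDegree_le_of_eval_eq_ehrGₗ {d : ℕ} {p g : K[X]}
    (hg : ∀ m : ℕ, g.eval (m : K) = ehrGₗ K d p m) : g.natDegree ≤ d := by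
  choose q hq hqe using fun i ↦ exists_natDegree_le_eval_natCast_eq_choose (K := K) d (d - i)
  have hgq : g = ∑ i ∈ range (d + 1), C (p.coeff i) * q i := by
    refine eq_of_infinite_eval_eq _ _
      (Set.infinite_of_injective_forall_mem Nat.cast_injective fun m ↦ ?_)
    simp only [Set.mem_ofPred_eq, hg, ehrGₗ_apply, eval_finsetSum, eval_mul, eval_C, hqe]
    refine sum_congr rfl fun i hi ↦ ?_
    rw [Nat.add_sub_assoc (Nat.le_of_lt_succ (mem_range.1 hi))]
  rw [hgq]
  exact natDegree_sum_le_of_forall_le _ _ fun i _ ↦ (natDegree_C_mul_le _ _).trans (hq i)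

end CharZero

theorem natDegree_eulerianPolyQ_le (d : ℕ) : (eulerianPolyQ d).natDegree ≤ d := by
  unfold eulerianPolyQ
  split_ifs
  · simp
  · exact natDegree_sum_le_of_forall_le _ _ fun i hi ↦
      (natDegree_C_mul_X_pow_le _ _).trans (mem_Icc.1 hi).2

theorem ehrGₗ_eulerianPolyQ (j m : ℕ) : ehrGₗ ℚ j (eulerianPolyQ j) m = (m : ℚ) ^ j := by
  rcases j with _ | k
  · simp [eulerianPolyQ, ehrGₗ_apply]
  · rw [eulerianPolyQ, if_neg k.succ_ne_zero, map_sum, Finset.sum_apply,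
      sum_congr rfl fun i hi ↦ by
        rw [← smul_eq_C_mul, map_smul, Pi.smul_apply, ehrGₗ_X_pow (mem_Icc.1 hi).2,
          smul_eq_mul]]
    exact_mod_cast (pow_eq_sum_eulerianNumber_mul_choose k m).symm

theorem natDegree_eulerianPolyQ_mul_one_sub_X_pow_le (j l : ℕ) :
    (eulerianPolyQ j * (1 - X) ^ l).natDegree ≤ j + l := by
  have h₁ : (1 - X : ℚ[X]).natDegree ≤ 1 := by compute_degree
  exact natDegree_mul_le.trans <| add_le_add (natDegree_eulerianPolyQ_le j) <|
    (natDegree_pow_le_of_le l h₁).trans_eq (mul_one l)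

theorem ehrGₗ_eulerianPolyQ_mul_one_sub_X_pow {j d : ℕ} (hj : j ≤ d) (m : ℕ) :
    ehrGₗ ℚ d (eulerianPolyQ j * (1 - X) ^ (d - j)) m = (m : ℚ) ^ j := by
  obtain ⟨l, rfl⟩ := Nat.exists_eq_add_of_le hj
  rw [Nat.add_sub_cancel_left]
  clear hj
  induction l with
  | zero => simpa using ehrGₗ_eulerianPolyQ j m
  | succ l ih =>
    rw [← add_assoc, pow_succ', mul_left_comm,
      ehrGₗ_one_sub_X_mul (natDegree_eulerianPolyQ_mul_one_sub_X_pow_le j l), ih]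

theorem stmt13_general (d : ℕ)
    (h : Polynomial ℤ)
    (g : Polynomial ℚ)
    -- g(m) = ∑_{i=0}^{d} h_i C(m+d-i, d)
    (hg : ∀ m : ℕ, g.eval (m : ℚ) =
      ∑ i ∈ Finset.range (d + 1), (h.coeff i : ℚ) * ((m + d - i).choose d : ℚ))
    (n : ℕ)
    (Uh : Polynomial ℤ) (hUdeg : Uh.natDegree ≤ d)
    (hU : ∀ m : ℕ, ehrG d Uh m = ehrG d h (n * m)) :
    Uh.map (Int.castRingHom ℚ) =
      ∑ j ∈ Finset.range (d + 1),
        C (g.coeff j * (n : ℚ) ^ j) * eulerianPolyQ j * (1 - X) ^ (d - j) := by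
  have hg' (m : ℕ) : g.eval (m : ℚ) = ehrGₗ ℚ d (h.map (Int.castRingHom ℚ)) m := by
    simp [hg, ehrGₗ_apply, coeff_map]
  have hgdeg : g.natDegree ≤ d := natDegree_le_of_eval_eq_ehrGₗ hg'
  refine eq_of_ehrGₗ_eq (natDegree_map_le.trans hUdeg)
    (natDegree_sum_le_of_forall_le _ _ fun j hj ↦ ?_) fun m _ ↦ ?_
  · rw [mul_assoc]
    exact (natDegree_C_mul_le _ _).trans <|
      (natDegree_eulerianPolyQ_mul_one_sub_X_pow_le _ _).trans (by simp at hj; omega)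
  · calc ehrGₗ ℚ d (Uh.map (Int.castRingHom ℚ)) m = g.eval ((n * m : ℕ) : ℚ) := by
          rw [ehrGₗ_map, hg', ehrGₗ_map, ← ehrG_eq_ehrGₗ, ← ehrG_eq_ehrGₗ, hU]
      _ = ∑ j ∈ range (d + 1), g.coeff j * (n : ℚ) ^ j * (m : ℚ) ^ j := by
          rw [eval_eq_sum_range' (Nat.lt_succ_of_le hgdeg)]
          push_cast
          simp only [mul_pow, mul_assoc]
      _ = _ := by
          rw [map_sum, Finset.sum_apply]
          refine sum_congr rfl fun j hj ↦ ?_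
          rw [mul_assoc (C _), ← smul_eq_C_mul, map_smul, Pi.smul_apply, smul_eq_mul,
            ehrGₗ_eulerianPolyQ_mul_one_sub_X_pow (by simp at hj; omega)]

theorem stmt13 (d : ℕ) (hd : 0 < d)
    (h : Polynomial ℤ) (hdeg : h.natDegree ≤ d)
    (g : Polynomial ℚ)
    -- g(m) = ∑_{i=0}^{d} h_i C(m+d-i, d)
    (hg : ∀ m : ℕ, g.eval (m : ℚ) =
      ∑ i ∈ Finset.range (d + 1), (h.coeff i : ℚ) * ((m + d - i).choose d : ℚ))
    (n : ℕ) (hn : 0 < n)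
    (Uh : Polynomial ℤ) (hUdeg : Uh.natDegree ≤ d)
    (hU : ∀ m : ℕ, ehrG d Uh m = ehrG d h (n * m)) :
    Uh.map (Int.castRingHom ℚ) =
      ∑ j ∈ Finset.range (d + 1),
        C (g.coeff j * (n : ℚ) ^ j) * eulerianPolyQ j * (1 - X) ^ (d - j) :=
  stmt13_general d h g hg n Uh hUdeg hU
end
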